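/- arXiv:2005.03340 — 9 statements merged into one kernel-verified Lean document; each statement's English description precedes it below -/
import Mathlib

section
/- Let SVI(k) = a + b(ρ(k−m) + √((k−m)² + σ²)) with b > 0, ρ ∈ (−1,1), σ > 0, a, m ∈ ℝ and a + bσ√(1−ρ²) > 0 (so SVI(k) > 0 for all k). Define d₁(k) = −k/√(SVI(k)) + √(SVI(k))/2. Then, as k → +∞, d₁(k) converges to −∞ if b(1+ρ) < 2, to 0 if b(1+ρ) = 2, and to +∞ if b(1+ρ) > 2. -/
/-!
With `x = k - m`, `SVI k - b (1 + ρ) k = a - b (1 + ρ) m + b (√(x² + σ²) - x)` stays bounded as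
`k → ∞`, so `SVI k = c k + O(1)` with `c = b (1 + ρ) > 0`; in particular `SVI k → ∞` and
`k / SVI k → 1 / c`. Writing `d₁ = √SVI · (1/2 - k / SVI)` gives `-∞` or `+∞` according as
`c < 2` or `c > 2`. For `c = 2`, `d₁ = (SVI k - 2 k) / (2 √SVI)` is bounded over unbounded.
-/

open Filter Asymptotics Real Topology

lemma sqrt_sq_add_sq_sub_self_isBigO_one (σ : ℝ) :
    (fun x => √(x ^ 2 + σ ^ 2) - x) =O[atTop] fun _ => (1 : ℝ) := by
  refine IsBigO.of_bound |σ| ?_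
  filter_upwards [eventually_ge_atTop 0] with x hx
  have hlow : x ≤ √(x ^ 2 + σ ^ 2) :=
    (le_abs_self x).trans (abs_le_sqrt (le_add_of_nonneg_right (sq_nonneg σ)))
  have hup : √(x ^ 2 + σ ^ 2) ≤ x + |σ| :=
    (sqrt_le_left (by positivity)).2 (by nlinarith [sq_abs σ, abs_nonneg σ])
  rw [norm_one, mul_one, norm_of_nonneg (sub_nonneg.2 hlow)]
  linarith

lemma svi_sub_linear_isBigO_one (a b ρ m σ : ℝ) :
    (fun k => a + b * (ρ * (k - m) + √((k - m) ^ 2 + σ ^ 2)) - b * (1 + ρ) * k)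
      =O[atTop] fun _ => (1 : ℝ) := by
  have hshift : Tendsto (fun k : ℝ => k - m) atTop atTop :=
    tendsto_atTop_add_const_right _ _ tendsto_id
  have h := ((isBigO_refl (fun _ => a - b * (1 + ρ) * m) atTop).trans
    (isBigO_const_one ℝ _ _)).add
    (((sqrt_sq_add_sq_sub_self_isBigO_one σ).comp_tendsto hshift).const_mul_left b)
  refine h.congr_left fun k => ?_
  simp only [Function.comp_apply]
  ring

noncomputable def blackScholesD1 (k s : ℝ) : ℝ := -k / s + s / 2

-- Both identities hold for every `v`: when `v ≤ 0`, `√v = 0` and each side is `0`.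
lemma blackScholesD1_sqrt_eq_mul (k v : ℝ) :
    blackScholesD1 k √v = √v * (1 / 2 - k / v) := by
  rcases le_or_gt v 0 with hv | hv
  · simp [blackScholesD1, sqrt_eq_zero'.2 hv]
  · have hs : √v * √v = v := mul_self_sqrt hv.le
    have : √v ≠ 0 := (sqrt_pos.2 hv).ne'
    rw [blackScholesD1]
    field_simp
    linear_combination (2 * k) * hs

lemma blackScholesD1_sqrt_eq_mul_inv (k v : ℝ) :
    blackScholesD1 k √v = (v - 2 * k) * (2 * √v)⁻¹ := by
  rcases le_or_gt v 0 with hv | hv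
  · simp [blackScholesD1, sqrt_eq_zero'.2 hv]
  · have hs : √v * √v = v := mul_self_sqrt hv.le
    have : √v ≠ 0 := (sqrt_pos.2 hv).ne'
    rw [blackScholesD1]
    field_simp
    linear_combination hs

section

variable {w : ℝ → ℝ} {c : ℝ}

lemma tendsto_div_self_of_sub_mul_isBigO_one
    (hw : (fun k => w k - c * k) =O[atTop] fun _ => (1 : ℝ)) :
    Tendsto (fun k => w k / k) atTop (𝓝 c) := by
  have h : Tendsto (fun k => (w k - c * k) * k⁻¹ + c) atTop (𝓝 c) := by
    simpa only [zero_add] using ((hw.mul (isBigO_refl (fun k : ℝ => k⁻¹) atTop)).trans_tendsto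
      (by simpa only [one_mul] using tendsto_inv_atTop_zero)).add_const c
  refine h.congr' ?_
  filter_upwards [eventually_ne_atTop 0] with k hk
  field_simp
  ring

lemma tendsto_atTop_of_sub_mul_isBigO_one
    (hw : (fun k => w k - c * k) =O[atTop] fun _ => (1 : ℝ)) (hc : 0 < c) :
    Tendsto w atTop atTop := by
  refine (tendsto_id.atTop_mul_pos hc (tendsto_div_self_of_sub_mul_isBigO_one hw)).congr' ?_
  filter_upwards [eventually_ne_atTop 0] with k hk
  exact mul_div_cancel₀ _ hk

lemma tendsto_self_div_of_sub_mul_isBigO_one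
    (hw : (fun k => w k - c * k) =O[atTop] fun _ => (1 : ℝ)) (hc : c ≠ 0) :
    Tendsto (fun k => k / w k) atTop (𝓝 c⁻¹) := by
  simpa only [inv_div] using (tendsto_div_self_of_sub_mul_isBigO_one hw).inv₀ hc

lemma tendsto_blackScholesD1_sqrt_atBot
    (hw : (fun k => w k - c * k) =O[atTop] fun _ => (1 : ℝ)) (hc : 0 < c) (hc2 : c < 2) :
    Tendsto (fun k => blackScholesD1 k √(w k)) atTop atBot := by
  have hlim : Tendsto (fun k => 1 / 2 - k / w k) atTop (𝓝 (1 / 2 - c⁻¹)) :=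
    tendsto_const_nhds.sub (tendsto_self_div_of_sub_mul_isBigO_one hw hc.ne')
  have hneg : 1 / 2 - c⁻¹ < 0 := by
    rw [sub_neg, one_div]
    exact inv_strictAnti₀ hc hc2
  simpa only [blackScholesD1_sqrt_eq_mul, Function.comp_apply] using
    (tendsto_sqrt_atTop.comp (tendsto_atTop_of_sub_mul_isBigO_one hw hc)).atTop_mul_neg hneg hlim

lemma tendsto_blackScholesD1_sqrt_atTop
    (hw : (fun k => w k - c * k) =O[atTop] fun _ => (1 : ℝ)) (hc2 : 2 < c) :
    Tendsto (fun k => blackScholesD1 k √(w k)) atTop atTop := by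
  have hc : 0 < c := two_pos.trans hc2
  have hlim : Tendsto (fun k => 1 / 2 - k / w k) atTop (𝓝 (1 / 2 - c⁻¹)) :=
    tendsto_const_nhds.sub (tendsto_self_div_of_sub_mul_isBigO_one hw hc.ne')
  have hpos : 0 < 1 / 2 - c⁻¹ := by
    rw [sub_pos, one_div]
    exact inv_strictAnti₀ two_pos hc2
  simpa only [blackScholesD1_sqrt_eq_mul, Function.comp_apply] using
    (tendsto_sqrt_atTop.comp (tendsto_atTop_of_sub_mul_isBigO_one hw hc)).atTop_mul_pos hpos hlim

lemma tendsto_blackScholesD1_sqrt_zero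
    (hw : (fun k => w k - 2 * k) =O[atTop] fun _ => (1 : ℝ)) :
    Tendsto (fun k => blackScholesD1 k √(w k)) atTop (𝓝 0) := by
  have hden : Tendsto (fun k => 2 * √(w k)) atTop atTop :=
    (tendsto_sqrt_atTop.comp (tendsto_atTop_of_sub_mul_isBigO_one hw two_pos)).const_mul_atTop
      two_pos
  simpa only [blackScholesD1_sqrt_eq_mul_inv] using
    (hw.mul (isBigO_refl (fun k => (2 * √(w k))⁻¹) atTop)).trans_tendsto
      (by simpa only [one_mul, Function.comp_def] using tendsto_inv_atTop_zero.comp hden)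

end

theorem svi_d1_limit_at_top_general
    (a b ρ m σ : ℝ) (hb : 0 < b) (hρ₁ : -1 < ρ)
    (SVI : ℝ → ℝ)
    (hSVI : ∀ k, SVI k = a + b * (ρ * (k - m) + Real.sqrt ((k - m) ^ 2 + σ ^ 2)))
    (d₁ : ℝ → ℝ)
    (hd₁ : ∀ k, d₁ k = -k / Real.sqrt (SVI k) + Real.sqrt (SVI k) / 2) :
    (b * (1 + ρ) < 2 → Filter.Tendsto d₁ Filter.atTop Filter.atBot) ∧
    (b * (1 + ρ) = 2 → Filter.Tendsto d₁ Filter.atTop (nhds 0)) ∧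
    (2 < b * (1 + ρ) → Filter.Tendsto d₁ Filter.atTop Filter.atTop) := by
  obtain rfl : d₁ = fun k => blackScholesD1 k √(SVI k) := funext hd₁
  obtain rfl : SVI = fun k => a + b * (ρ * (k - m) + √((k - m) ^ 2 + σ ^ 2)) := funext hSVI
  have hlin := svi_sub_linear_isBigO_one a b ρ m σ
  refine ⟨fun hc2 => tendsto_blackScholesD1_sqrt_atBot hlin (mul_pos hb (by linarith)) hc2,
    fun hc2 => tendsto_blackScholesD1_sqrt_zero (hc2 ▸ hlin),
    fun hc2 => tendsto_blackScholesD1_sqrt_atTop hlin hc2⟩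

/-- Limit of the Black–Scholes coefficient `d₁` along the SVI smile
as the log-forward moneyness `k → +∞`, in the three regimes
`b(1+ρ) < 2`, `b(1+ρ) = 2`, `b(1+ρ) > 2`. -/
theorem svi_d1_limit_at_top
    (a b ρ m σ : ℝ) (hb : 0 < b) (hρ₁ : -1 < ρ) (hρ₂ : ρ < 1) (hσ : 0 < σ)
    (ha : 0 < a + b * σ * Real.sqrt (1 - ρ ^ 2))
    (SVI : ℝ → ℝ)
    (hSVI : ∀ k, SVI k = a + b * (ρ * (k - m) + Real.sqrt ((k - m) ^ 2 + σ ^ 2)))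
    (hSVIpos : ∀ k, 0 < SVI k)
    (d₁ : ℝ → ℝ)
    (hd₁ : ∀ k, d₁ k = -k / Real.sqrt (SVI k) + Real.sqrt (SVI k) / 2) :
    (b * (1 + ρ) < 2 → Filter.Tendsto d₁ Filter.atTop Filter.atBot) ∧
    (b * (1 + ρ) = 2 → Filter.Tendsto d₁ Filter.atTop (nhds 0)) ∧
    (2 < b * (1 + ρ) → Filter.Tendsto d₁ Filter.atTop Filter.atTop) :=
  svi_d1_limit_at_top_general a b ρ m σ hb hρ₁ SVI hSVI d₁ hd₁
end

section
/- Let b > 0, ρ ∈ (−1,1), α ∈ ℝ with α + b√(1−ρ²) > 0, and define N(l) = α + b(ρl + √(l²+1)). Fix σ > 0, μ ∈ ℝ and set w(k) = σ·N(k/σ − μ), which is positive. Define the Durrleman function g(k) = (1 − k w'(k)/(2w(k)))² − (w'(k)²/4)(1/w(k) + 1/4) + w''(k)/2. Then for every l ∈ ℝ, g(σ(l+μ)) = G₁(l) + G₂(l)/(2σ), where G₁(l) = (1 − N'(l)((l+μ)/(2N(l)) + 1/4))·(1 − N'(l)((l+μ)/(2N(l)) − 1/4)) and G₂(l) = N''(l)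 − N'(l)²/(2N(l)). -/
/-!
Writing `k = σ (l + μ)`, every derivative of `w(k) = σ N(k/σ − μ)` is an unconditional rescaling of
the corresponding derivative of `N` (`w' = N'`, `w'' = N''/σ`, Mathlib's `deriv` needing no
differentiability for affine reparametrisations), after which the decomposition is a field identity
in `N, N', N''` that only needs `N(l) ≠ 0`. Positivity of the SVI slice follows from
`ρ l + √(l² + 1) ≥ √(1 − ρ²)`, an instance of Cauchy–Schwarz.
-/

open Real

lemma deriv_comp_div_sub_const (f : ℝ → ℝ) (σ μ k : ℝ) :
    deriv (fun k => f (k / σ - μ)) k = deriv f (k / σ - μ) / σ := by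
  have h := deriv_comp_mul_left σ⁻¹ (fun y => f (y - μ)) k
  simp only [smul_eq_mul, deriv_comp_sub_const] at h
  simpa only [div_eq_inv_mul, mul_comm _ σ⁻¹] using h

lemma deriv_const_mul_comp_div_sub_const {σ : ℝ} (hσ : σ ≠ 0) (f : ℝ → ℝ) (μ : ℝ) :
    deriv (fun k => σ * f (k / σ - μ)) = fun k => deriv f (k / σ - μ) := by
  ext k
  rw [deriv_const_mul_field, deriv_comp_div_sub_const, mul_div_cancel₀ _ hσ]

lemma sqrt_one_sub_sq_le_mul_add_sqrt {ρ : ℝ} (hρ : ρ ^ 2 ≤ 1) (l : ℝ) :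
    √(1 - ρ ^ 2) ≤ ρ * l + √(l ^ 2 + 1) := by
  have hs : √(1 - ρ ^ 2) ^ 2 = 1 - ρ ^ 2 := sq_sqrt (by linarith)
  have key : (√(1 - ρ ^ 2) - ρ * l) ^ 2 ≤ l ^ 2 + 1 := by
    nlinarith [sq_nonneg (ρ + √(1 - ρ ^ 2) * l)]
  linarith [le_sqrt_of_sq_le key]

lemma svi_pos {α b ρ : ℝ} (hb : 0 ≤ b) (hρ : ρ ^ 2 ≤ 1) (hα : 0 < α + b * √(1 - ρ ^ 2))
    (l : ℝ) : 0 < α + b * (ρ * l + √(l ^ 2 + 1)) := by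
  have := mul_le_mul_of_nonneg_left (sqrt_one_sub_sq_le_mul_add_sqrt hρ l) hb
  linarith

noncomputable def durrleman (w : ℝ → ℝ) (k : ℝ) : ℝ :=
  (1 - k * deriv w k / (2 * w k)) ^ 2 - (deriv w k) ^ 2 / 4 * (1 / w k + 1 / 4) +
    deriv (deriv w) k / 2

lemma durrleman_const_mul_comp_div_sub_const {σ : ℝ} (hσ : σ ≠ 0) (N : ℝ → ℝ) (μ : ℝ)
    {l : ℝ} (hN : N l ≠ 0) :
    durrleman (fun k => σ * N (k / σ - μ)) (σ * (l + μ)) =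
      (1 - deriv N l * ((l + μ) / (2 * N l) + 1 / 4)) *
          (1 - deriv N l * ((l + μ) / (2 * N l) - 1 / 4)) +
        (deriv (deriv N) l - (deriv N l) ^ 2 / (2 * N l)) / (2 * σ) := by
  have hl : σ * (l + μ) / σ - μ = l := by field_simp; ring
  simp only [durrleman, deriv_const_mul_comp_div_sub_const hσ, deriv_comp_div_sub_const, hl]
  field_simp
  ring

/-- decomposition of the Durrleman function of the SVI smile,
`g(σ(l+μ)) = G₁(l) + G₂(l)/(2σ)`, where `w(k) = σN(k/σ − μ)` is the SVI total
variance in normalized parameters. -/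
theorem durrleman_decomposition
    (b ρ α σ μ : ℝ) (hb : 0 < b) (hρ₁ : -1 < ρ) (hρ₂ : ρ < 1)
    (hα : 0 < α + b * Real.sqrt (1 - ρ ^ 2)) (hσ : 0 < σ)
    (N w g G₁ G₂ : ℝ → ℝ)
    (hN : ∀ l, N l = α + b * (ρ * l + Real.sqrt (l ^ 2 + 1)))
    (hw : ∀ k, w k = σ * N (k / σ - μ))
    (hg : ∀ k, g k = (1 - k * deriv w k / (2 * w k)) ^ 2 -
        (deriv w k) ^ 2 / 4 * (1 / w k + 1 / 4) + deriv (deriv w) k / 2)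
    (hG₁ : ∀ l, G₁ l =
        (1 - deriv N l * ((l + μ) / (2 * N l) + 1 / 4)) *
        (1 - deriv N l * ((l + μ) / (2 * N l) - 1 / 4)))
    (hG₂ : ∀ l, G₂ l = deriv (deriv N) l - (deriv N l) ^ 2 / (2 * N l)) :
    (∀ k, 0 < w k) ∧
    ∀ l : ℝ, g (σ * (l + μ)) = G₁ l + G₂ l / (2 * σ) := by
  have hρ : ρ ^ 2 ≤ 1 := by nlinarith
  have hNpos : ∀ l, 0 < N l := fun l => hN l ▸ svi_pos hb.le hρ hα l
  obtain rfl : g = durrleman w := funext hg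
  obtain rfl : w = fun k => σ * N (k / σ - μ) := funext hw
  refine ⟨fun k => mul_pos hσ (hNpos _), fun l => ?_⟩
  rw [hG₁, hG₂]
  exact durrleman_const_mul_comp_div_sub_const hσ.ne' N μ (hNpos l).ne'
end

section
/- Let b > 0, ρ ∈ (−1,1), α ∈ ℝ with α + b√(1−ρ²) > 0, N(l) = α + b(ρl + √(l²+1)), and fix μ ∈ ℝ. Let G₁(l) = (1 − N'(l)((l+μ)/(2N(l)) + 1/4))·(1 − N'(l)((l+μ)/(2N(l)) − 1/4)). Then lim_{l→±∞} G₁(l) = (1/2 − b(ρ±1)/4)·(1/2 + b(ρ±1)/4). In particular both limits are nonnegative if and only if b(1+ρ) ≤ 2 and b(1−ρ) ≤ 2. -/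
open Filter Topology Bornology

/-!
Along `l → ±∞` put `σ = ±1`, the limit of `l / √(l² + 1)`. Then both the slope `N'(l)` and
`N(l) / l` tend to `c = b(ρ + σ)`, which is nonzero since `|ρ| < 1`, so `(l + μ) / (2 N(l))`
tends to `1 / (2c)` and `G₁` tends to
`(1 - c (1/(2c) + 1/4)) (1 - c (1/(2c) - 1/4)) = (1/2 - c/4) (1/2 + c/4)`.
This limit is `1/4 - c²/16`, nonnegative exactly when `|c| ≤ 2`, and `c` has the sign of `σ`.
-/

lemma hasDerivAt_svi (α b ρ l : ℝ) :
    HasDerivAt (fun x => α + b * (ρ * x + √(x ^ 2 + 1))) (b * (ρ + l / √(l ^ 2 + 1))) l := by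
  have hsqrt : HasDerivAt (fun x : ℝ => √(x ^ 2 + 1)) (l / √(l ^ 2 + 1)) l := by
    convert ((hasDerivAt_pow 2 l).add_const 1).sqrt (by positivity) using 1
    field_simp
    ring
  simpa using ((((hasDerivAt_id l).const_mul ρ).add hsqrt).const_mul b).const_add α

lemma tendsto_div_sqrt_sq_add_one_atTop :
    Tendsto (fun l : ℝ => l / √(l ^ 2 + 1)) atTop (𝓝 1) := by
  have hcont : Tendsto (fun y : ℝ => (√(1 + y ^ 2))⁻¹) (𝓝 0) (𝓝 1) := by
    have : Continuous (fun y : ℝ => (√(1 + y ^ 2))⁻¹) :=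
      ((continuous_const.add (continuous_pow 2)).sqrt).inv₀ fun y =>
        Real.sqrt_ne_zero'.2 (add_pos_of_pos_of_nonneg one_pos (sq_nonneg y))
    simpa using this.tendsto 0
  refine (hcont.comp tendsto_inv_atTop_zero).congr' ?_
  filter_upwards [eventually_gt_atTop 0] with l hl
  have hsqrt : √(l ^ 2 + 1) = l * √(1 + l⁻¹ ^ 2) := by
    rw [← Real.sqrt_sq hl.le, ← Real.sqrt_mul (sq_nonneg l), Real.sqrt_sq hl.le]
    field_simp
  rw [Function.comp_apply, hsqrt, div_mul_cancel_left₀ hl.ne']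

lemma tendsto_div_sqrt_sq_add_one_atBot :
    Tendsto (fun l : ℝ => l / √(l ^ 2 + 1)) atBot (𝓝 (-1)) := by
  simpa [Function.comp_def, neg_div] using
    (tendsto_div_sqrt_sq_add_one_atTop.comp tendsto_neg_atBot_atTop).neg

section AlongCobounded

variable {F : Filter ℝ} {σ : ℝ}

lemma tendsto_svi_div_self (α b ρ : ℝ) (hF : F ≤ cobounded ℝ)
    (hσ : Tendsto (fun l : ℝ => l / √(l ^ 2 + 1)) F (𝓝 σ)) (hσσ : σ * σ = 1) :
    Tendsto (fun l => (α + b * (ρ * l + √(l ^ 2 + 1))) / l) F (𝓝 (b * (ρ + σ))) := by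
  have hinv : Tendsto Inv.inv F (𝓝 (0 : ℝ)) := tendsto_inv₀_cobounded.mono_left hF
  have hlim := (hinv.const_mul α).add
    ((hσ.inv₀ (left_ne_zero_of_mul_eq_one hσσ)).const_add ρ |>.const_mul b)
  rw [mul_zero, zero_add, inv_eq_of_mul_eq_one_right hσσ] at hlim
  refine hlim.congr' ?_
  filter_upwards [hF (eventually_ne_cobounded 0)] with l hl
  have : √(l ^ 2 + 1) ≠ 0 := Real.sqrt_ne_zero'.2 (by positivity)
  field_simp

theorem tendsto_G₁_of_svi {b ρ α μ : ℝ} (hF : F ≤ cobounded ℝ)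
    (hσ : Tendsto (fun l : ℝ => l / √(l ^ 2 + 1)) F (𝓝 σ)) (hσσ : σ * σ = 1)
    (hc : b * (ρ + σ) ≠ 0) {N N' G₁ : ℝ → ℝ}
    (hN : ∀ l, N l = α + b * (ρ * l + √(l ^ 2 + 1)))
    (hN' : ∀ l, HasDerivAt N (N' l) l)
    (hG₁ : ∀ l, G₁ l =
        (1 - N' l * ((l + μ) / (2 * N l) + 1 / 4)) *
        (1 - N' l * ((l + μ) / (2 * N l) - 1 / 4))) :
    Tendsto G₁ F (𝓝 ((1 / 2 - b * (ρ + σ) / 4) * (1 / 2 + b * (ρ + σ) / 4))) := by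
  set c := b * (ρ + σ)
  have hN'_lim : Tendsto N' F (𝓝 c) := by
    have hN'_eq : N' = fun l => b * (ρ + l / √(l ^ 2 + 1)) := by
      funext l
      exact (hN' l).unique (funext hN ▸ hasDerivAt_svi α b ρ l)
    rw [hN'_eq]
    exact (hσ.const_add ρ).const_mul b
  have hne : ∀ᶠ l in F, l ≠ 0 := hF (eventually_ne_cobounded 0)
  have hnum : Tendsto (fun l => (l + μ) / l) F (𝓝 1) := by
    have := ((tendsto_inv₀_cobounded.mono_left hF).const_mul μ).const_add 1
    rw [mul_zero, add_zero] at this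
    refine this.congr' ?_
    filter_upwards [hne] with l hl
    field_simp
  have hQ : Tendsto (fun l => (l + μ) / (2 * N l)) F (𝓝 (1 / (2 * c))) := by
    have hN_div : Tendsto (fun l => N l / l) F (𝓝 c) := by
      simpa only [hN] using tendsto_svi_div_self α b ρ hF hσ hσσ
    refine (hnum.div (hN_div.const_mul 2) (mul_ne_zero two_ne_zero hc)).congr' ?_
    filter_upwards [hne] with l hl
    simp only [Pi.div_apply, mul_div_assoc', div_div_div_cancel_right₀ hl]
  rw [funext hG₁]
  convert ((hN'_lim.mul (hQ.add_const (1 / 4))).const_sub 1).mul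
    ((hN'_lim.mul (hQ.sub_const (1 / 4))).const_sub 1) using 2
  field_simp
  ring

end AlongCobounded

lemma half_sub_mul_half_add_nonneg_iff (x : ℝ) :
    0 ≤ (1 / 2 - x / 4) * (1 / 2 + x / 4) ↔ |x| ≤ 2 := by
  rw [← abs_two, ← sq_le_sq]
  constructor <;> intro h <;> nlinarith

theorem G1_limits_at_infinity_general
    (b ρ α μ : ℝ) (hb : 0 < b) (hρ₁ : -1 < ρ) (hρ₂ : ρ < 1)
    (N N' G₁ : ℝ → ℝ)
    (hN : ∀ l, N l = α + b * (ρ * l + Real.sqrt (l ^ 2 + 1)))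
    (hN' : ∀ l, HasDerivAt N (N' l) l)
    (hG₁ : ∀ l, G₁ l =
        (1 - N' l * ((l + μ) / (2 * N l) + 1 / 4)) *
        (1 - N' l * ((l + μ) / (2 * N l) - 1 / 4))) :
    Filter.Tendsto G₁ Filter.atTop
      (nhds ((1 / 2 - b * (ρ + 1) / 4) * (1 / 2 + b * (ρ + 1) / 4))) ∧
    Filter.Tendsto G₁ Filter.atBot
      (nhds ((1 / 2 - b * (ρ - 1) / 4) * (1 / 2 + b * (ρ - 1) / 4))) ∧
    ((0 ≤ (1 / 2 - b * (ρ + 1) / 4) * (1 / 2 + b * (ρ + 1) / 4) ∧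
      0 ≤ (1 / 2 - b * (ρ - 1) / 4) * (1 / 2 + b * (ρ - 1) / 4)) ↔
      (b * (1 + ρ) ≤ 2 ∧ b * (1 - ρ) ≤ 2)) := by
  have hpos : 0 < b * (ρ + 1) := mul_pos hb (by linarith)
  have hneg : b * (ρ - 1) < 0 := mul_neg_of_pos_of_neg hb (by linarith)
  refine ⟨tendsto_G₁_of_svi IsOrderBornology.atTop_le_cobounded
      tendsto_div_sqrt_sq_add_one_atTop (mul_one 1) hpos.ne' hN hN' hG₁, ?_, ?_⟩
  · simpa only [← sub_eq_add_neg] using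
      tendsto_G₁_of_svi IsOrderBornology.atBot_le_cobounded tendsto_div_sqrt_sq_add_one_atBot
        (by norm_num) (by simpa only [← sub_eq_add_neg] using hneg.ne) hN hN' hG₁
  · rw [half_sub_mul_half_add_nonneg_iff, half_sub_mul_half_add_nonneg_iff, abs_of_pos hpos,
      abs_of_neg hneg]
    constructor <;> rintro ⟨h₁, h₂⟩ <;> constructor <;> linarith

/-- Limits of `G₁`: the first term `G₁` of the Durrleman
decomposition of the SVI smile satisfies
`lim_{l→±∞} G₁(l) = (1/2 − b(ρ±1)/4)(1/2 + b(ρ±1)/4)`, and both limits are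
nonnegative iff `b(1+ρ) ≤ 2` and `b(1−ρ) ≤ 2`. -/
theorem G1_limits_at_infinity
    (b ρ α μ : ℝ) (hb : 0 < b) (hρ₁ : -1 < ρ) (hρ₂ : ρ < 1)
    (hα : 0 < α + b * Real.sqrt (1 - ρ ^ 2))
    (N N' G₁ : ℝ → ℝ)
    (hN : ∀ l, N l = α + b * (ρ * l + Real.sqrt (l ^ 2 + 1)))
    (hN' : ∀ l, HasDerivAt N (N' l) l)
    (hG₁ : ∀ l, G₁ l =
        (1 - N' l * ((l + μ) / (2 * N l) + 1 / 4)) *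
        (1 - N' l * ((l + μ) / (2 * N l) - 1 / 4))) :
    Filter.Tendsto G₁ Filter.atTop
      (nhds ((1 / 2 - b * (ρ + 1) / 4) * (1 / 2 + b * (ρ + 1) / 4))) ∧
    Filter.Tendsto G₁ Filter.atBot
      (nhds ((1 / 2 - b * (ρ - 1) / 4) * (1 / 2 + b * (ρ - 1) / 4))) ∧
    ((0 ≤ (1 / 2 - b * (ρ + 1) / 4) * (1 / 2 + b * (ρ + 1) / 4) ∧
      0 ≤ (1 / 2 - b * (ρ - 1) / 4) * (1 / 2 + b * (ρ - 1) / 4)) ↔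
      (b * (1 + ρ) ≤ 2 ∧ b * (1 - ρ) ≤ 2)) :=
  G1_limits_at_infinity_general b ρ α μ hb hρ₁ hρ₂ N N' G₁ hN hN' hG₁
end

section
/- Let b > 0, ρ ∈ (−1,1), α ∈ ℝ with α + b√(1−ρ²) > 0, and b(1+ρ) < 2, b(1−ρ) < 2. Let N(l) = α + b(ρl + √(l²+1)), l* = −ρ/√(1−ρ²), L₊(l) = 2N(l)(1/N'(l) − 1/4) − l for l > l*, and L₋(l) = 2N(l)(1/N'(l) + 1/4) − l for l < l*. Define g₊(l) = (ρ√(l²+1)+l)²(√(l²+1)(1/2 − bρ/4) − bl/4) − (ρl+√(l²+1)) and g₋(l) = (ρ√(l²+1)+l)²(√(l²+1)(1/2 + bρ/4) + bl/4) − (ρl+√(l²+1)). Then for l > l*, (d/dl)L₊(l) = 1 − N'(l)/2 − 2N(l)N''(l)/N'(l)², and (d/dl)L₊(l) = 0 if and only if g₊(l) = α/b; and for l < l*, (d/dl)L₋(l) = 1 + N'(l)/2 − 2N(l)N''(l)/N'(l)², and (d/dl)L₋(l) = 0 if and only if g₋(l) = α/b. -/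
/-!
Write `s = √(l² + 1)` and `Q = ρ s + l`, so that `N' = b Q / s` and `N'' = b / s³`. The only
zero of `Q` is `l*`, so `N'` does not vanish off `l*` and `L±` are differentiable there by the
quotient rule. Multiplying `L±'` by the positive factor `s Q² / 2` clears all denominators and
gives exactly `g± - α / b`.
-/

open Real Filter Topology

noncomputable section

def sviN (α b ρ l : ℝ) : ℝ := α + b * (ρ * l + √(l ^ 2 + 1))

def sviN' (b ρ l : ℝ) : ℝ := b * (ρ + l / √(l ^ 2 + 1))

def sviN'' (b l : ℝ) : ℝ := b / (l ^ 2 + 1) ^ ((3 : ℝ) / 2)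

/-- `ε = -1` gives `L₊`, `ε = 1` gives `L₋`. -/
def sviL (α b ρ ε l : ℝ) : ℝ := 2 * sviN α b ρ l * (1 / sviN' b ρ l + ε / 4) - l

/-- `ε = -1` gives `g₊`, `ε = 1` gives `g₋`. -/
def sviG (b ρ ε l : ℝ) : ℝ :=
  (ρ * √(l ^ 2 + 1) + l) ^ 2 * (√(l ^ 2 + 1) * (1 / 2 + ε * b * ρ / 4) + ε * b * l / 4) -
    (ρ * l + √(l ^ 2 + 1))

end

theorem hasDerivAt_two_mul_mul_one_div_add_sub {f f' : ℝ → ℝ} {f'' ε x : ℝ}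
    (hf : HasDerivAt f (f' x) x) (hf' : HasDerivAt f' f'' x) (hx : f' x ≠ 0) :
    HasDerivAt (fun y ↦ 2 * f y * (1 / f' y + ε / 4) - y)
      (1 + ε * f' x / 2 - 2 * f x * f'' / f' x ^ 2) x := by
  have := (((hf.const_mul 2).div hf' hx).add (hf.const_mul (ε / 2))).sub (hasDerivAt_id x)
  refine (this.congr_deriv ?_).congr_of_eventuallyEq ?_
  · field_simp
    ring
  · filter_upwards with y
    simp only [Pi.sub_apply, Pi.add_apply, Pi.div_apply, id_eq]
    ring

theorem hasDerivAt_sqrt_sq_add_one (x : ℝ) :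
    HasDerivAt (fun y ↦ √(y ^ 2 + 1)) (x / √(x ^ 2 + 1)) x := by
  have hpos : 0 < √(x ^ 2 + 1) := by positivity
  convert ((hasDerivAt_pow 2 x).add_const 1).sqrt (by positivity) using 1
  field_simp
  ring

theorem hasDerivAt_sviN (α b ρ x : ℝ) : HasDerivAt (sviN α b ρ) (sviN' b ρ x) x := by
  have := ((((hasDerivAt_id x).const_mul ρ).add (hasDerivAt_sqrt_sq_add_one x)).const_mul
    b).const_add α
  exact this.congr_deriv (by simp [sviN'])

theorem hasDerivAt_sviN' (b ρ x : ℝ) : HasDerivAt (sviN' b ρ) (sviN'' b x) x := by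
  have hpos : 0 < √(x ^ 2 + 1) := by positivity
  have hsq : √(x ^ 2 + 1) ^ 2 = x ^ 2 + 1 := sq_sqrt (by positivity)
  refine (((hasDerivAt_id' x).div (hasDerivAt_sqrt_sq_add_one x) hpos.ne').const_add ρ
    |>.const_mul b).congr_deriv ?_
  rw [sviN'', rpow_div_two_eq_sqrt _ (by positivity)]
  norm_cast
  field_simp
  rw [hsq]
  ring

theorem sviN'_eq (b ρ l : ℝ) :
    sviN' b ρ l = b * (ρ * √(l ^ 2 + 1) + l) / √(l ^ 2 + 1) := by
  have hs : 0 < √(l ^ 2 + 1) := by positivity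
  rw [sviN']
  field_simp

theorem eq_neg_div_sqrt_one_sub_sq_of_mul_sqrt_add_eq_zero {ρ l : ℝ}
    (h : ρ * √(l ^ 2 + 1) + l = 0) : l = -ρ / √(1 - ρ ^ 2) := by
  have hs : 0 < √(l ^ 2 + 1) := by positivity
  have hρ : ρ = -l / √(l ^ 2 + 1) := by
    field_simp
    linarith
  have hsq : 1 - ρ ^ 2 = (1 / √(l ^ 2 + 1)) ^ 2 := by
    rw [hρ, div_pow, div_pow, sq_sqrt (by positivity)]
    field_simp
    ring
  rw [hsq, sqrt_sq (by positivity)]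
  field_simp
  linarith

theorem mul_sqrt_add_ne_zero {ρ l : ℝ} (hl : l ≠ -ρ / √(1 - ρ ^ 2)) :
    ρ * √(l ^ 2 + 1) + l ≠ 0 :=
  fun h ↦ hl (eq_neg_div_sqrt_one_sub_sq_of_mul_sqrt_add_eq_zero h)

theorem sviN'_ne_zero {b ρ l : ℝ} (hb : b ≠ 0) (hl : l ≠ -ρ / √(1 - ρ ^ 2)) :
    sviN' b ρ l ≠ 0 := by
  have hs : 0 < √(l ^ 2 + 1) := by positivity
  rw [sviN'_eq]
  exact div_ne_zero (mul_ne_zero hb (mul_sqrt_add_ne_zero hl)) hs.ne'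

theorem hasDerivAt_sviL {α b ρ ε l : ℝ} (hb : b ≠ 0) (hl : l ≠ -ρ / √(1 - ρ ^ 2)) :
    HasDerivAt (sviL α b ρ ε)
      (1 + ε * sviN' b ρ l / 2 - 2 * sviN α b ρ l * sviN'' b l / sviN' b ρ l ^ 2) l :=
  hasDerivAt_two_mul_mul_one_div_add_sub (hasDerivAt_sviN α b ρ l) (hasDerivAt_sviN' b ρ l)
    (sviN'_ne_zero hb hl)

theorem sviL_deriv_mul_eq_sviG_sub (α b ρ ε l : ℝ) (hb : b ≠ 0)
    (hl : l ≠ -ρ / √(1 - ρ ^ 2)) :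
    (1 + ε * sviN' b ρ l / 2 - 2 * sviN α b ρ l * sviN'' b l / sviN' b ρ l ^ 2) *
        (√(l ^ 2 + 1) * (ρ * √(l ^ 2 + 1) + l) ^ 2 / 2) =
      sviG b ρ ε l - α / b := by
  have hs : 0 < √(l ^ 2 + 1) := by positivity
  have hQ := mul_sqrt_add_ne_zero hl
  rw [sviN'_eq, sviN, sviN'', sviG, rpow_div_two_eq_sqrt _ (by positivity)]
  norm_cast
  field_simp
  ring

theorem sviL_deriv_eq_zero_iff {α b ρ ε l : ℝ} (hb : b ≠ 0)
    (hl : l ≠ -ρ / √(1 - ρ ^ 2)) :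
    1 + ε * sviN' b ρ l / 2 - 2 * sviN α b ρ l * sviN'' b l / sviN' b ρ l ^ 2 = 0 ↔
      sviG b ρ ε l = α / b := by
  have hM : √(l ^ 2 + 1) * (ρ * √(l ^ 2 + 1) + l) ^ 2 / 2 ≠ 0 := by
    have := mul_sqrt_add_ne_zero hl
    positivity
  rw [← sub_eq_zero (b := α / b), ← sviL_deriv_mul_eq_sviG_sub α b ρ ε l hb hl, mul_eq_zero,
    or_iff_left hM]

theorem hasDerivAt_and_critical_iff_of_eventuallyEq_sviL {α b ρ ε l : ℝ} {L : ℝ → ℝ}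
    (hb : b ≠ 0) (hl : l ≠ -ρ / √(1 - ρ ^ 2)) (hL : L =ᶠ[𝓝 l] sviL α b ρ ε) :
    HasDerivAt L
        (1 + ε * sviN' b ρ l / 2 - 2 * sviN α b ρ l * sviN'' b l / sviN' b ρ l ^ 2) l ∧
      (1 + ε * sviN' b ρ l / 2 - 2 * sviN α b ρ l * sviN'' b l / sviN' b ρ l ^ 2 = 0 ↔
        sviG b ρ ε l = α / b) :=
  ⟨(hasDerivAt_sviL hb hl).congr_of_eventuallyEq hL, sviL_deriv_eq_zero_iff hb hl⟩

theorem L_pm_derivative_and_critical_points_general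
    (b ρ α : ℝ) (hb : 0 < b)
    (lstar : ℝ) (hlstar : lstar = -ρ / Real.sqrt (1 - ρ ^ 2))
    (N N' N'' Lp Lm gp gm : ℝ → ℝ)
    (hN : ∀ l, N l = α + b * (ρ * l + Real.sqrt (l ^ 2 + 1)))
    (hN' : ∀ l, N' l = b * (ρ + l / Real.sqrt (l ^ 2 + 1)))
    (hN'' : ∀ l, N'' l = b / (l ^ 2 + 1) ^ ((3 : ℝ) / 2))
    (hLp : ∀ l, lstar < l → Lp l = 2 * N l * (1 / N' l - 1 / 4) - l)
    (hLm : ∀ l, l < lstar → Lm l = 2 * N l * (1 / N' l + 1 / 4) - l)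
    (hgp : ∀ l, gp l = (ρ * Real.sqrt (l ^ 2 + 1) + l) ^ 2 *
        (Real.sqrt (l ^ 2 + 1) * (1 / 2 - b * ρ / 4) - b * l / 4) -
        (ρ * l + Real.sqrt (l ^ 2 + 1)))
    (hgm : ∀ l, gm l = (ρ * Real.sqrt (l ^ 2 + 1) + l) ^ 2 *
        (Real.sqrt (l ^ 2 + 1) * (1 / 2 + b * ρ / 4) + b * l / 4) -
        (ρ * l + Real.sqrt (l ^ 2 + 1))) :
    (∀ l, lstar < l →
      HasDerivAt Lp (1 - N' l / 2 - 2 * N l * N'' l / (N' l) ^ 2) l ∧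
      (1 - N' l / 2 - 2 * N l * N'' l / (N' l) ^ 2 = 0 ↔ gp l = α / b)) ∧
    (∀ l, l < lstar →
      HasDerivAt Lm (1 + N' l / 2 - 2 * N l * N'' l / (N' l) ^ 2) l ∧
      (1 + N' l / 2 - 2 * N l * N'' l / (N' l) ^ 2 = 0 ↔ gm l = α / b)) := by
  obtain rfl : N = sviN α b ρ := funext hN
  obtain rfl : N' = sviN' b ρ := funext hN'
  obtain rfl : N'' = sviN'' b := funext hN''
  subst hlstar
  constructor
  · intro l hl
    have hL : Lp =ᶠ[𝓝 l] sviL α b ρ (-1) := by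
      filter_upwards [eventually_gt_nhds hl] with y hy
      rw [hLp y hy, sviL]
      ring
    have key := hasDerivAt_and_critical_iff_of_eventuallyEq_sviL hb.ne' hl.ne' hL
    rw [hgp]
    rw [sviG] at key
    convert key using 3 <;> ring
  · intro l hl
    have hL : Lm =ᶠ[𝓝 l] sviL α b ρ 1 := by
      filter_upwards [eventually_lt_nhds hl] with y hy
      rw [hLm y hy, sviL]
    have key := hasDerivAt_and_critical_iff_of_eventuallyEq_sviL hb.ne' hl.ne hL
    rw [hgm]
    rw [sviG] at key
    convert key using 3 <;> ring

/-- derivative formulas for `L₊` (on `l > l*`) and `L₋` (on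
`l < l*`), and the characterization of their critical points through
`g₊(l) = α/b` and `g₋(l) = α/b`. -/
theorem L_pm_derivative_and_critical_points
    (b ρ α : ℝ) (hb : 0 < b) (hρ₁ : -1 < ρ) (hρ₂ : ρ < 1)
    (hα : 0 < α + b * Real.sqrt (1 - ρ ^ 2))
    (h₁ : b * (1 + ρ) < 2) (h₂ : b * (1 - ρ) < 2)
    (lstar : ℝ) (hlstar : lstar = -ρ / Real.sqrt (1 - ρ ^ 2))
    (N N' N'' Lp Lm gp gm : ℝ → ℝ)
    (hN : ∀ l, N l = α + b * (ρ * l + Real.sqrt (l ^ 2 + 1)))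
    (hN' : ∀ l, N' l = b * (ρ + l / Real.sqrt (l ^ 2 + 1)))
    (hN'' : ∀ l, N'' l = b / (l ^ 2 + 1) ^ ((3 : ℝ) / 2))
    (hLp : ∀ l, lstar < l → Lp l = 2 * N l * (1 / N' l - 1 / 4) - l)
    (hLm : ∀ l, l < lstar → Lm l = 2 * N l * (1 / N' l + 1 / 4) - l)
    (hgp : ∀ l, gp l = (ρ * Real.sqrt (l ^ 2 + 1) + l) ^ 2 *
        (Real.sqrt (l ^ 2 + 1) * (1 / 2 - b * ρ / 4) - b * l / 4) -
        (ρ * l + Real.sqrt (l ^ 2 + 1)))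
    (hgm : ∀ l, gm l = (ρ * Real.sqrt (l ^ 2 + 1) + l) ^ 2 *
        (Real.sqrt (l ^ 2 + 1) * (1 / 2 + b * ρ / 4) + b * l / 4) -
        (ρ * l + Real.sqrt (l ^ 2 + 1))) :
    (∀ l, lstar < l →
      HasDerivAt Lp (1 - N' l / 2 - 2 * N l * N'' l / (N' l) ^ 2) l ∧
      (1 - N' l / 2 - 2 * N l * N'' l / (N' l) ^ 2 = 0 ↔ gp l = α / b)) ∧
    (∀ l, l < lstar →
      HasDerivAt Lm (1 + N' l / 2 - 2 * N l * N'' l / (N' l) ^ 2) l ∧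
      (1 + N' l / 2 - 2 * N l * N'' l / (N' l) ^ 2 = 0 ↔ gm l = α / b)) :=
  L_pm_derivative_and_critical_points_general b ρ α hb lstar hlstar N N' N'' Lp Lm gp gm hN hN' hN''
    hLp hLm hgp hgm
end

section
/- Let b > 0, ρ ∈ (−1,1) with b(1+ρ) < 2 and b(1−ρ) < 2, l* = −ρ/√(1−ρ²), and let N'(l) = b(ρ + l/√(l²+1)), N''(l) = b/(l²+1)^{3/2}. Define g₋(l) = (ρ√(l²+1)+l)²(√(l²+1)(1/2 + bρ/4) + bl/4) − (ρl+√(l²+1)) for l < l*, and for x < l* define α(x) = b·g₋(x) and N_x(l) = α(x) + b(ρl + √(l²+1)). Then L₋(x; α(x)) := 2N_x(x)(1/N'(x) + 1/4) − x satisfies the identity L₋(x; α(x)) = (N'(x)²/N''(x))·(1 + N'(x)/2)·(1/N'(x) + 1/4) − x, and consequently lim_{x→l*⁻} L₋(x; α(x)) = −l*. -/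
open Filter Topology Real

/-!
Write `s = √(l² + 1)`. Then `N'(l) = b (ρ s + l) / s` and `N''(l) = b / s³`, so
`N'²/N'' · (1 + N'/2) = b (ρ s + l)² (s + b (ρ s + l)/2)`, which is exactly `2 N_l(l)` for the
choice `α(l) = b g₋(l)`; this gives the closed form. In it, `N'²(1/N' + 1/4) = N' + N'²/4` is
continuous, and since `N'(l*) = 0` while `N''(l*) > 0`, the limit at `l*` is `0 - l* = -l*`.
-/

lemma rpow_three_halves_eq_sqrt_pow_three {a : ℝ} (ha : 0 ≤ a) :
    a ^ ((3 : ℝ) / 2) = √a ^ 3 := by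
  rw [sqrt_eq_rpow, ← rpow_natCast, ← rpow_mul ha]
  norm_num

lemma two_mul_svi_eq_slope_sq_div_curvature {b : ℝ} (hb : b ≠ 0) (ρ l : ℝ) :
    2 * (b * ((ρ * √(l ^ 2 + 1) + l) ^ 2 * (√(l ^ 2 + 1) * (1 / 2 + b * ρ / 4) + b * l / 4) -
        (ρ * l + √(l ^ 2 + 1))) + b * (ρ * l + √(l ^ 2 + 1))) =
      (b * (ρ + l / √(l ^ 2 + 1))) ^ 2 / (b / (l ^ 2 + 1) ^ ((3 : ℝ) / 2)) *
        (1 + b * (ρ + l / √(l ^ 2 + 1)) / 2) := by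
  have hs : 0 < √(l ^ 2 + 1) := sqrt_pos.mpr (by positivity)
  have hs2 : √(l ^ 2 + 1) ^ 2 = l ^ 2 + 1 := sq_sqrt (by positivity)
  rw [rpow_three_halves_eq_sqrt_pow_three (by positivity)]
  field_simp
  ring

lemma svi_slope_eq_zero_at_minimizer {ρ : ℝ} (hρ₁ : -1 < ρ) (hρ₂ : ρ < 1) :
    ρ + -ρ / √(1 - ρ ^ 2) / √((-ρ / √(1 - ρ ^ 2)) ^ 2 + 1) = 0 := by
  have hρ : 0 < 1 - ρ ^ 2 := by nlinarith
  have ht : 0 < √(1 - ρ ^ 2) := sqrt_pos.mpr hρ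
  have hsq : (-ρ / √(1 - ρ ^ 2)) ^ 2 + 1 = (1 / √(1 - ρ ^ 2)) ^ 2 := by
    field_simp
    rw [sq_sqrt hρ.le]
    ring
  rw [hsq, sqrt_sq (by positivity)]
  field_simp
  ring

lemma continuous_svi_slope (b ρ : ℝ) :
    Continuous fun l : ℝ => b * (ρ + l / √(l ^ 2 + 1)) :=
  continuous_const.mul <| continuous_const.add <|
    continuous_id.div (by fun_prop) fun l => (sqrt_pos.mpr (by positivity)).ne'

lemma continuous_svi_curvature (b : ℝ) :
    Continuous fun l : ℝ => b / (l ^ 2 + 1) ^ ((3 : ℝ) / 2) :=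
  continuous_const.div ((by fun_prop : Continuous fun l : ℝ => l ^ 2 + 1).rpow_const
    fun _ => Or.inr (by norm_num)) fun _ => by positivity

-- Also true at `y = 0`, where `1 / y = 0` and both sides vanish.
lemma sq_div_mul_one_add_half_mul_inv_add_quarter (y z : ℝ) :
    y ^ 2 / z * (1 + y / 2) * (1 / y + 1 / 4) = (y + y ^ 2 / 4) * (1 + y / 2) / z := by
  rcases eq_or_ne y 0 with rfl | hy
  · simp
  · field_simp

lemma tendsto_sq_div_mul_one_add_half_mul_inv_add_quarter_sub_id {f g : ℝ → ℝ} {a : ℝ}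
    (hf : ContinuousAt f a) (hg : ContinuousAt g a) (hga : g a ≠ 0) (hfa : f a = 0) :
    Tendsto (fun x => f x ^ 2 / g x * (1 + f x / 2) * (1 / f x + 1 / 4) - x) (𝓝 a) (𝓝 (-a)) := by
  simp_rw [sq_div_mul_one_add_half_mul_inv_add_quarter]
  have hcont : ContinuousAt (fun x => (f x + f x ^ 2 / 4) * (1 + f x / 2) / g x - x) a :=
    (((hf.add ((hf.pow 2).div_const 4)).mul (continuousAt_const.add (hf.div_const 2))).div
      hg hga).sub continuousAt_id
  simpa [hfa] using hcont.tendsto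

theorem Lm_along_critical_curve_general
    (b ρ : ℝ) (hb : 0 < b) (hρ₁ : -1 < ρ) (hρ₂ : ρ < 1)
    (lstar : ℝ) (hlstar : lstar = -ρ / Real.sqrt (1 - ρ ^ 2))
    (N' N'' gm αf : ℝ → ℝ) (Nx : ℝ → ℝ → ℝ) (Lm : ℝ → ℝ)
    (hN' : ∀ l, N' l = b * (ρ + l / Real.sqrt (l ^ 2 + 1)))
    (hN'' : ∀ l, N'' l = b / (l ^ 2 + 1) ^ ((3 : ℝ) / 2))
    (hgm : ∀ l, gm l = (ρ * Real.sqrt (l ^ 2 + 1) + l) ^ 2 *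
        (Real.sqrt (l ^ 2 + 1) * (1 / 2 + b * ρ / 4) + b * l / 4) -
        (ρ * l + Real.sqrt (l ^ 2 + 1)))
    (hαf : ∀ x, αf x = b * gm x)
    (hNx : ∀ x l, Nx x l = αf x + b * (ρ * l + Real.sqrt (l ^ 2 + 1)))
    (hLm : ∀ x, Lm x = 2 * Nx x x * (1 / N' x + 1 / 4) - x) :
    (∀ x, x < lstar →
      Lm x = (N' x) ^ 2 / N'' x * (1 + N' x / 2) * (1 / N' x + 1 / 4) - x) ∧
    Filter.Tendsto Lm (nhdsWithin lstar (Set.Iio lstar)) (nhds (-lstar)) := by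
  have hclosed : ∀ x, Lm x = N' x ^ 2 / N'' x * (1 + N' x / 2) * (1 / N' x + 1 / 4) - x := by
    intro x
    rw [hLm, hNx, hαf, hgm, hN', hN'', two_mul_svi_eq_slope_sq_div_curvature hb.ne']
  refine ⟨fun x _ => hclosed x, ?_⟩
  have hslope : N' lstar = 0 := by
    rw [hN', hlstar, svi_slope_eq_zero_at_minimizer hρ₁ hρ₂, mul_zero]
  have hcurv : N'' lstar ≠ 0 := by
    rw [hN'']
    positivity
  rw [funext hclosed]
  refine tendsto_nhdsWithin_of_tendsto_nhds ?_
  refine tendsto_sq_div_mul_one_add_half_mul_inv_add_quarter_sub_id ?_ ?_ hcurv hslope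
  · rw [funext hN']
    exact (continuous_svi_slope b ρ).continuousAt
  · rw [funext hN'']
    exact (continuous_svi_curvature b).continuousAt

/-- along the curve `α(x) = b·g₋(x)`, the value
`L₋(x; α(x)) = 2N_x(x)(1/N'(x) + 1/4) − x` has the closed form
`(N'(x)²/N''(x))(1 + N'(x)/2)(1/N'(x) + 1/4) − x`, and tends to `−l*`
as `x → l*⁻`. -/
theorem Lm_along_critical_curve
    (b ρ : ℝ) (hb : 0 < b) (hρ₁ : -1 < ρ) (hρ₂ : ρ < 1)
    (h₁ : b * (1 + ρ) < 2) (h₂ : b * (1 - ρ) < 2)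
    (lstar : ℝ) (hlstar : lstar = -ρ / Real.sqrt (1 - ρ ^ 2))
    (N' N'' gm αf : ℝ → ℝ) (Nx : ℝ → ℝ → ℝ) (Lm : ℝ → ℝ)
    (hN' : ∀ l, N' l = b * (ρ + l / Real.sqrt (l ^ 2 + 1)))
    (hN'' : ∀ l, N'' l = b / (l ^ 2 + 1) ^ ((3 : ℝ) / 2))
    (hgm : ∀ l, gm l = (ρ * Real.sqrt (l ^ 2 + 1) + l) ^ 2 *
        (Real.sqrt (l ^ 2 + 1) * (1 / 2 + b * ρ / 4) + b * l / 4) -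
        (ρ * l + Real.sqrt (l ^ 2 + 1)))
    (hαf : ∀ x, αf x = b * gm x)
    (hNx : ∀ x l, Nx x l = αf x + b * (ρ * l + Real.sqrt (l ^ 2 + 1)))
    (hLm : ∀ x, Lm x = 2 * Nx x x * (1 / N' x + 1 / 4) - x) :
    (∀ x, x < lstar →
      Lm x = (N' x) ^ 2 / N'' x * (1 + N' x / 2) * (1 / N' x + 1 / 4) - x) ∧
    Filter.Tendsto Lm (nhdsWithin lstar (Set.Iio lstar)) (nhds (-lstar)) :=
  Lm_along_critical_curve_general b ρ hb hρ₁ hρ₂ lstar hlstar N' N'' gm αf Nx Lm hN' hN'' hgm hαf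
    hNx hLm
end

section
/- Let b > 0, ρ ∈ (−1,1) with b(1+ρ) ≤ 2 and b(1−ρ) ≤ 2, α ≥ 0, N(l) = α + b(ρl + √(l²+1)), l* = −ρ/√(1−ρ²). Then for every l < l*, L₋(l) = 2N(l)(1/N'(l) + 1/4) − l < 0, and for every l > l*, L₊(l) = 2N(l)(1/N'(l) − 1/4) − l > 0. In particular μ = 0 satisfies sup_{l<l*} L₋(l) ≤ 0 ≤ inf_{l>l*} L₊(l), so the Fukasawa interval for μ is nonempty whenever α ≥ 0. -/
/-!
With `s = √(l² + 1)` one has `N'(l) = b (ρ s + l) / s`, and `ρ s + l` has the sign of `l - l*`.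
So for `l < l*`, `L₋(l) < 0` amounts to positivity of `2 N s + b (ρ s + l) (N / 2 - l)`, a
polynomial in `α, b, ρ, l, s`: it is affine in `α` with positive slope, and at `α = 0` it
decreases in `b`, while at `b (1 - ρ) = 2` it is `b ((1 + ρ) (s + l)² + 3 (1 - ρ)) / (2 (1 - ρ))`.
The reflection `(ρ, l) ↦ (-ρ, -l)` fixes `N`, negates `N'` and `l*`, and turns `L₊` into `-L₋`.
-/

noncomputable section

def svi (α b ρ l : ℝ) : ℝ := α + b * (ρ * l + √(l ^ 2 + 1))

def sviDeriv (b ρ l : ℝ) : ℝ := b * (ρ + l / √(l ^ 2 + 1))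

def fukasawaLower (α b ρ l : ℝ) : ℝ := 2 * svi α b ρ l * (1 / sviDeriv b ρ l + 1 / 4) - l

def fukasawaUpper (α b ρ l : ℝ) : ℝ := 2 * svi α b ρ l * (1 / sviDeriv b ρ l - 1 / 4) - l

end

lemma abs_lt_sqrt_sq_add_one (l : ℝ) : |l| < √(l ^ 2 + 1) :=
  (Real.lt_sqrt (abs_nonneg l)).2 (by rw [sq_abs]; linarith)

lemma abs_mul_lt_sqrt_sq_add_one {ρ : ℝ} (hρ₁ : -1 < ρ) (hρ₂ : ρ < 1) (l : ℝ) :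
    |ρ * l| < √(l ^ 2 + 1) :=
  calc |ρ * l| ≤ |l| := by
        rw [abs_mul]; exact mul_le_of_le_one_left (abs_nonneg l) (abs_le.2 ⟨hρ₁.le, hρ₂.le⟩)
    _ < √(l ^ 2 + 1) := abs_lt_sqrt_sq_add_one l

lemma mul_sqrt_sq_add_one_add_neg_iff {ρ : ℝ} (hρ₁ : -1 < ρ) (hρ₂ : ρ < 1) (l : ℝ) :
    ρ * √(l ^ 2 + 1) + l < 0 ↔ l < -ρ / √(1 - ρ ^ 2) := by
  set s := √(l ^ 2 + 1)
  set t := √(1 - ρ ^ 2)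
  have hs : s ^ 2 = l ^ 2 + 1 := Real.sq_sqrt (by positivity)
  have ht : t ^ 2 = 1 - ρ ^ 2 := Real.sq_sqrt (by nlinarith)
  have ht_pos : 0 < t := Real.sqrt_pos_of_pos (by nlinarith)
  have hρl := abs_lt.1 (abs_mul_lt_sqrt_sq_add_one hρ₁ hρ₂ l)
  -- with `ρ = sin θ`, `l = tan φ`, this is
  -- `(sin θ + sin φ) (1 + cos (θ + φ)) = sin (θ + φ) (cos θ + cos φ)`
  have key : (ρ * s + l) * (s + t - ρ * l) = (l * t + ρ) * (t * s + 1) := by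
    linear_combination ρ * hs - l * s * ht
  have hA : 0 < s + t - ρ * l := by linarith
  have hB : 0 < t * s + 1 := by positivity
  rw [lt_div_iff₀ ht_pos, lt_neg_iff_add_neg, ← mul_lt_mul_iff_of_pos_right hA, zero_mul, key]
  simpa using mul_lt_mul_iff_of_pos_right (c := 0) hB

lemma fukasawaLower_numerator_pos {α b ρ l s : ℝ} (hb : 0 < b) (hρ₁ : -1 < ρ) (hρ₂ : ρ < 1)
    (h : b * (1 - ρ) ≤ 2) (hα : 0 ≤ α) (hs : s ^ 2 = l ^ 2 + 1) (hls : -s < l)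
    (hq : 0 < ρ * l + s) (hc : ρ * s + l < 0) :
    0 < 2 * (α + b * (ρ * l + s)) * s + b * (ρ * s + l) * ((α + b * (ρ * l + s)) / 2 - l) := by
  have hs_pos : 0 < s := by nlinarith
  have hα_coeff : 0 < 4 * s + b * (ρ * s + l) := by
    nlinarith [mul_pos hb (show 0 < s + l by linarith), mul_le_mul_of_nonneg_right h hs_pos.le]
  -- the `b`-part decreases in `b`: `hrepr` is its value at `b (1 - ρ) = 2` plus the slack
  have hb_coeff :
      0 < 2 * (2 * (ρ * l + s) * s - (ρ * s + l) * l) + b * (ρ * s + l) * (ρ * l + s) := by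
    have hslack : 0 ≤ (2 - b * (1 - ρ)) * ((ρ * l + s) * -(ρ * s + l)) :=
      mul_nonneg (by linarith) (mul_nonneg hq.le (by linarith))
    have hrepr : (1 - ρ) * (2 * (2 * (ρ * l + s) * s - (ρ * s + l) * l)
        + b * (ρ * s + l) * (ρ * l + s))
        = (1 + ρ) * (s + l) ^ 2 + 3 * (1 - ρ)
          + (2 - b * (1 - ρ)) * ((ρ * l + s) * -(ρ * s + l)) := by
      linear_combination 3 * (1 - ρ) * hs
    have : 0 < (1 + ρ) * (s + l) ^ 2 + 3 * (1 - ρ) := by nlinarith [sq_nonneg (s + l)]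
    exact pos_of_mul_pos_right (hrepr ▸ by linarith) (by linarith : (0:ℝ) ≤ 1 - ρ)
  calc (0:ℝ) < α * (4 * s + b * (ρ * s + l)) / 2
        + b * (2 * (2 * (ρ * l + s) * s - (ρ * s + l) * l)
          + b * (ρ * s + l) * (ρ * l + s)) / 2 := by
        have := mul_nonneg hα hα_coeff.le
        have := mul_pos hb hb_coeff
        linarith
    _ = _ := by ring

lemma fukasawaLower_neg {α b ρ l : ℝ} (hb : 0 < b) (hρ₁ : -1 < ρ) (hρ₂ : ρ < 1)
    (h : b * (1 - ρ) ≤ 2) (hα : 0 ≤ α) (hl : l < -ρ / √(1 - ρ ^ 2)) :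
    fukasawaLower α b ρ l < 0 := by
  set s := √(l ^ 2 + 1) with hs_def
  have hs : s ^ 2 = l ^ 2 + 1 := Real.sq_sqrt (by positivity)
  have hs_pos : 0 < s := Real.sqrt_pos_of_pos (by positivity)
  have hls : -s < l := (abs_lt.1 (abs_lt_sqrt_sq_add_one l)).1
  have hq : 0 < ρ * l + s := by linarith [(abs_lt.1 (abs_mul_lt_sqrt_sq_add_one hρ₁ hρ₂ l)).1]
  have hc : ρ * s + l < 0 := (mul_sqrt_sq_add_one_add_neg_iff hρ₁ hρ₂ l).2 hl
  have hderiv : sviDeriv b ρ l = b * (ρ * s + l) / s := by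
    rw [sviDeriv, ← hs_def]
    field_simp
  have hlower : fukasawaLower α b ρ l = (2 * (α + b * (ρ * l + s)) * s
      + b * (ρ * s + l) * ((α + b * (ρ * l + s)) / 2 - l)) / (b * (ρ * s + l)) := by
    have := hc.ne
    have := hb.ne'
    rw [fukasawaLower, hderiv, svi, ← hs_def]
    field_simp
    ring
  rw [hlower]
  exact div_neg_of_pos_of_neg
    (fukasawaLower_numerator_pos hb hρ₁ hρ₂ h hα hs hls hq hc) (mul_neg_of_pos_of_neg hb hc)

lemma svi_neg_neg (α b ρ l : ℝ) : svi α b (-ρ) (-l) = svi α b ρ l := by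
  simp only [svi, neg_mul_neg, neg_sq]

lemma sviDeriv_neg_neg (b ρ l : ℝ) : sviDeriv b (-ρ) (-l) = -sviDeriv b ρ l := by
  simp only [sviDeriv, neg_sq, neg_div]
  ring

lemma fukasawaUpper_eq_neg_fukasawaLower_neg_neg (α b ρ l : ℝ) :
    fukasawaUpper α b ρ l = -fukasawaLower α b (-ρ) (-l) := by
  simp only [fukasawaUpper, fukasawaLower, svi_neg_neg, sviDeriv_neg_neg]
  ring

lemma fukasawaUpper_pos {α b ρ l : ℝ} (hb : 0 < b) (hρ₁ : -1 < ρ) (hρ₂ : ρ < 1)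
    (h : b * (1 + ρ) ≤ 2) (hα : 0 ≤ α) (hl : -ρ / √(1 - ρ ^ 2) < l) :
    0 < fukasawaUpper α b ρ l := by
  rw [fukasawaUpper_eq_neg_fukasawaLower_neg_neg, neg_pos]
  refine fukasawaLower_neg hb (by linarith) (by linarith) (by rwa [sub_neg_eq_add]) hα ?_
  rw [neg_sq, neg_neg]
  rw [neg_div] at hl
  linarith

/-- for `α ≥ 0` (with `b(1±ρ) ≤ 2`), one has `L₋ < 0` on
`l < l*` and `L₊ > 0` on `l > l*`; in particular
`sup_{l<l*} L₋ ≤ 0 ≤ inf_{l>l*} L₊`, so the Fukasawa interval for `μ` is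
nonempty. -/
theorem fukasawa_interval_nonempty_alpha_nonneg
    (b ρ α : ℝ) (hb : 0 < b) (hρ₁ : -1 < ρ) (hρ₂ : ρ < 1)
    (h₁ : b * (1 + ρ) ≤ 2) (h₂ : b * (1 - ρ) ≤ 2) (hα : 0 ≤ α)
    (lstar : ℝ) (hlstar : lstar = -ρ / Real.sqrt (1 - ρ ^ 2))
    (N N' Lm Lp : ℝ → ℝ)
    (hN : ∀ l, N l = α + b * (ρ * l + Real.sqrt (l ^ 2 + 1)))
    (hN' : ∀ l, N' l = b * (ρ + l / Real.sqrt (l ^ 2 + 1)))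
    (hLm : ∀ l, Lm l = 2 * N l * (1 / N' l + 1 / 4) - l)
    (hLp : ∀ l, Lp l = 2 * N l * (1 / N' l - 1 / 4) - l) :
    (∀ l, l < lstar → Lm l < 0) ∧
    (∀ l, lstar < l → 0 < Lp l) ∧
    sSup (Lm '' Set.Iio lstar) ≤ 0 ∧ 0 ≤ sInf (Lp '' Set.Ioi lstar) := by
  subst hlstar
  obtain rfl : N = svi α b ρ := funext hN
  obtain rfl : N' = sviDeriv b ρ := funext hN'
  obtain rfl : Lm = fukasawaLower α b ρ := funext hLm
  obtain rfl : Lp = fukasawaUpper α b ρ := funext hLp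
  have hLower l (hl : l < _) := fukasawaLower_neg hb hρ₁ hρ₂ h₂ hα hl
  have hUpper l (hl : _ < l) := fukasawaUpper_pos hb hρ₁ hρ₂ h₁ hα hl
  refine ⟨hLower, hUpper, Real.sSup_nonpos ?_, Real.sInf_nonneg ?_⟩
  · rintro _ ⟨l, hl, rfl⟩
    exact (hLower l hl).le
  · rintro _ ⟨l, hl, rfl⟩
    exact (hUpper l hl).le
end

section
/- Let b > 0, ρ ∈ (−1,1), α ∈ ℝ with α + b√(1−ρ²) > 0, N(l) = α + b(ρl + √(l²+1)), l* = −ρ/√(1−ρ²), and G₂(l) = N''(l) − N'(l)²/(2N(l)). Then G₂ has exactly two zeros l₁, l₂, which satisfy l₁ < min(l*, 0) and l₂ > max(l*, 0); G₂(l) > 0 if and only if l₁ < l < l₂; G₂(l) < 0 for l < l₁ and for l > l₂; and lim_{l→±∞} G₂(l) = 0 (with G₂ negative near ±∞). -/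
/-!
Multiplying `G₂` by the positive factor `2 N(l) (l² + 1)^{3/2} / b` gives
`H(l) = 2 N(l) - b √(l²+1) (ρ √(l²+1) + l)²` (`SVI.G2numer`), and
`H'(l) = -3 b l (ρ √(l²+1) + l)² / √(l²+1)`. Since `ρ √(l²+1) + l` vanishes only at `l*`, `H` is
strictly increasing on `(-∞, 0]` and strictly decreasing on `[0, ∞)`. Both `H(0)` and
`H(l*) = 2 N(l*)` are positive, and `H → -∞` at `±∞` because it is bounded above by
`2α - 2b(ρl + √(l²+1))` once `ρl + √(l²+1) ≥ 3`; so `H` has one zero on each side of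
`[min(l*, 0), max(l*, 0)]`. Finally `G₂ → 0` because `N'` is bounded while `N` and
`(l²+1)^{3/2}` tend to infinity.
-/

open Real Filter Set Topology

theorem Real.rpow_three_halves {x : ℝ} (hx : 0 ≤ x) : x ^ ((3 : ℝ) / 2) = √x ^ 3 := by
  rw [show (3 : ℝ) / 2 = 1 / 2 * (3 : ℕ) by norm_num, rpow_mul hx, rpow_natCast, ← sqrt_eq_rpow]

theorem Real.tendsto_abs_cocompact_atTop : Tendsto (fun x : ℝ => |x|) (cocompact ℝ) atTop :=
  tendsto_norm_cocompact_atTop.congr norm_eq_abs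

theorem strictMonoOn_of_hasDerivAt_pos_of_ne {D : Set ℝ} (hD : Convex ℝ D) {f f' : ℝ → ℝ}
    (hf : ContinuousOn f D) (hf' : ∀ x ∈ interior D, HasDerivAt f (f' x) x) {c : ℝ}
    (hpos : ∀ x ∈ interior D, x ≠ c → 0 < f' x) : StrictMonoOn f D := by
  have piece : ∀ E ⊆ D, Convex ℝ E → interior E ⊆ {c}ᶜ → StrictMonoOn f E := fun E hED hE hc =>
    strictMonoOn_of_hasDerivWithinAt_pos hE (hf.mono hED)
      (fun x hx => (hf' x (interior_mono hED hx)).hasDerivWithinAt)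
      (fun x hx => hpos x (interior_mono hED hx) (hc hx))
  have hleft := piece (D ∩ Iic c) inter_subset_left (hD.inter (convex_Iic c)) (by
    rw [interior_inter, interior_Iic]; exact fun x hx => hx.2.ne)
  have hright := piece (D ∩ Ici c) inter_subset_left (hD.inter (convex_Ici c)) (by
    rw [interior_inter, interior_Ici]; exact fun x hx => hx.2.ne')
  intro x hx y hy hxy
  rcases le_or_gt y c with hyc | hcy
  · exact hleft ⟨hx, hxy.le.trans hyc⟩ ⟨hy, hyc⟩ hxy
  rcases le_or_gt c x with hcx | hxc
  · exact hright ⟨hx, hcx⟩ ⟨hy, hcy.le⟩ hxy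
  have hcD : c ∈ D := hD.ordConnected.out hx hy ⟨hxc.le, hcy.le⟩
  exact (hleft ⟨hx, hxc.le⟩ ⟨hcD, le_refl c⟩ hxc).trans (hright ⟨hcD, le_refl c⟩ ⟨hy, hcy.le⟩ hcy)

theorem strictAntiOn_of_hasDerivAt_neg_of_ne {D : Set ℝ} (hD : Convex ℝ D) {f f' : ℝ → ℝ}
    (hf : ContinuousOn f D) (hf' : ∀ x ∈ interior D, HasDerivAt f (f' x) x) {c : ℝ}
    (hneg : ∀ x ∈ interior D, x ≠ c → f' x < 0) : StrictAntiOn f D := by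
  simpa using (strictMonoOn_of_hasDerivAt_pos_of_ne hD hf.neg (fun x hx => (hf' x hx).neg)
    (fun x hx hxc => neg_pos.2 (hneg x hx hxc))).neg

theorem exists_zeros_of_strictMonoOn_Iic_of_strictAntiOn_Ici {f : ℝ → ℝ} {c : ℝ}
    (hf : Continuous f) (hmono : StrictMonoOn f (Iic c)) (hanti : StrictAntiOn f (Ici c))
    (hc : 0 < f c) (hbot : ∀ᶠ x in atBot, f x < 0) (htop : ∀ᶠ x in atTop, f x < 0) :
    ∃ l₁ l₂, l₁ < c ∧ c < l₂ ∧ (∀ x, f x = 0 ↔ x = l₁ ∨ x = l₂) ∧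
      (∀ x, 0 < f x ↔ l₁ < x ∧ x < l₂) ∧ (∀ x, f x < 0 ↔ x < l₁ ∨ l₂ < x) := by
  obtain ⟨a, hfa, hac⟩ := (hbot.and (eventually_lt_atBot c)).exists
  obtain ⟨d, hfd, hcd⟩ := (htop.and (eventually_gt_atTop c)).exists
  obtain ⟨l₁, ⟨-, hl₁c⟩, hl₁⟩ := intermediate_value_Ioo hac.le hf.continuousOn ⟨hfa, hc⟩
  obtain ⟨l₂, ⟨hcl₂, -⟩, hl₂⟩ := intermediate_value_Ioo' hcd.le hf.continuousOn ⟨hfd, hc⟩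
  have hzero_pos : ∀ x, (f x = 0 ↔ x = l₁ ∨ x = l₂) ∧ (0 < f x ↔ l₁ < x ∧ x < l₂) := by
    intro x
    rcases le_total x c with hxc | hcx
    · rw [← hl₁, hmono.eq_iff_eq hxc hl₁c.le, hmono.lt_iff_lt hl₁c.le hxc]
      have : x < l₂ := hxc.trans_lt hcl₂
      exact ⟨by simp [this.ne], by simp [this]⟩
    · rw [← hl₂, eq_comm, hanti.eq_iff_eq hcl₂.le hcx, hanti.lt_iff_gt hcl₂.le hcx]
      have : l₁ < x := hl₁c.trans_le hcx
      exact ⟨by simp [this.ne', eq_comm], by simp [this]⟩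
  refine ⟨l₁, l₂, hl₁c, hcl₂, fun x => (hzero_pos x).1, fun x => (hzero_pos x).2, fun x => ?_⟩
  rw [← not_le, le_iff_lt_or_eq, (hzero_pos x).2, eq_comm, (hzero_pos x).1]
  grind

namespace SVI

theorem sqrt_sq_add_one_pos (l : ℝ) : 0 < √(l ^ 2 + 1) := sqrt_pos.2 (by positivity)

theorem abs_le_sqrt_sq_add_one (l : ℝ) : |l| ≤ √(l ^ 2 + 1) := abs_le_sqrt (by linarith)

theorem hasDerivAt_sqrt_sq_add_one (l : ℝ) :
    HasDerivAt (fun x => √(x ^ 2 + 1)) (l / √(l ^ 2 + 1)) l := by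
  convert ((hasDerivAt_pow 2 l).add_const 1).sqrt (by positivity) using 1
  field_simp
  ring

noncomputable section

def shape (ρ l : ℝ) : ℝ := ρ * l + √(l ^ 2 + 1)

def N (b ρ α l : ℝ) : ℝ := α + b * shape ρ l

def G2 (b ρ α l : ℝ) : ℝ :=
  b / (l ^ 2 + 1) ^ ((3 : ℝ) / 2) - (b * (ρ + l / √(l ^ 2 + 1))) ^ 2 / (2 * N b ρ α l)

def G2numer (b ρ α l : ℝ) : ℝ := 2 * N b ρ α l - b * √(l ^ 2 + 1) * (ρ * √(l ^ 2 + 1) + l) ^ 2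

end

variable {b ρ α : ℝ}

theorem sq_shape (ρ l : ℝ) : shape ρ l ^ 2 = (1 - ρ ^ 2) + (ρ * √(l ^ 2 + 1) + l) ^ 2 := by
  unfold shape
  linear_combination (1 - ρ ^ 2) * sq_sqrt (by positivity : 0 ≤ l ^ 2 + 1)

theorem one_sub_abs_mul_le_shape (ρ l : ℝ) : (1 - |ρ|) * √(l ^ 2 + 1) ≤ shape ρ l := by
  have h₁ := abs_le_sqrt_sq_add_one l
  have h₂ : -(|ρ| * |l|) ≤ ρ * l := by rw [← abs_mul]; exact neg_abs_le _
  unfold shape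
  nlinarith [abs_nonneg ρ]

theorem sqrt_one_sub_sq_le_shape (hρ : |ρ| < 1) (l : ℝ) : √(1 - ρ ^ 2) ≤ shape ρ l := by
  have h := one_sub_abs_mul_le_shape ρ l
  rw [sqrt_le_iff, sq_shape]
  exact ⟨le_trans (by nlinarith [sqrt_sq_add_one_pos l]) h, by nlinarith⟩

theorem tendsto_shape_cocompact (hρ : |ρ| < 1) : Tendsto (shape ρ) (cocompact ℝ) atTop := by
  refine tendsto_atTop_mono (fun l => ?_)
    (tendsto_abs_cocompact_atTop.const_mul_atTop (sub_pos.2 hρ))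
  exact (mul_le_mul_of_nonneg_left (abs_le_sqrt_sq_add_one l) (sub_pos.2 hρ).le).trans
    (one_sub_abs_mul_le_shape ρ l)

theorem mul_sqrt_add_eq_zero_iff (hρ : |ρ| < 1) (l : ℝ) :
    ρ * √(l ^ 2 + 1) + l = 0 ↔ l = -ρ / √(1 - ρ ^ 2) := by
  have ht : 0 < √(1 - ρ ^ 2) := sqrt_pos.2 (by nlinarith [sq_abs ρ, abs_nonneg ρ])
  have ht2 := sq_sqrt (by nlinarith [sq_abs ρ, abs_nonneg ρ] : 0 ≤ 1 - ρ ^ 2)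
  have hs := sqrt_sq_add_one_pos l
  have hs2 := sq_sqrt (by positivity : 0 ≤ l ^ 2 + 1)
  constructor
  · intro h
    have hst2 : (√(l ^ 2 + 1) * √(1 - ρ ^ 2)) ^ 2 = 1 := by
      rw [mul_pow, hs2, ht2]
      linear_combination (l - ρ * √(l ^ 2 + 1)) * h + ρ ^ 2 * hs2
    have hst : √(l ^ 2 + 1) * √(1 - ρ ^ 2) = 1 := by nlinarith [mul_pos hs ht]
    field_simp
    linear_combination √(1 - ρ ^ 2) * h - ρ * hst
  · rintro rfl
    have hst : √((-ρ / √(1 - ρ ^ 2)) ^ 2 + 1) = 1 / √(1 - ρ ^ 2) := by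
      rw [sqrt_eq_iff_mul_self_eq_of_pos (by positivity)]
      field_simp
      linarith
    rw [hst]
    ring

theorem N_pos (hb : 0 ≤ b) (hρ : |ρ| < 1) (hα : 0 < α + b * √(1 - ρ ^ 2)) (l : ℝ) :
    0 < N b ρ α l :=
  hα.trans_le (by unfold N; gcongr; exact sqrt_one_sub_sq_le_shape hρ l)

theorem G2_eq_mul_G2numer {l : ℝ} (hN : N b ρ α l ≠ 0) :
    G2 b ρ α l = b / (2 * N b ρ α l * √(l ^ 2 + 1) ^ 3) * G2numer b ρ α l := by
  have hs := (sqrt_sq_add_one_pos l).ne'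
  unfold G2 G2numer
  rw [rpow_three_halves (by positivity)]
  field_simp

theorem sign_G2 (hb : 0 < b) (hρ : |ρ| < 1) (hα : 0 < α + b * √(1 - ρ ^ 2)) (l : ℝ) :
    SignType.sign (G2 b ρ α l) = SignType.sign (G2numer b ρ α l) := by
  have hN := N_pos hb.le hρ hα l
  have hs := sqrt_sq_add_one_pos l
  rw [G2_eq_mul_G2numer hN.ne', sign_mul, sign_pos (by positivity), one_mul]

theorem continuous_G2numer : Continuous (G2numer b ρ α) := by
  unfold G2numer N shape
  fun_prop

theorem hasDerivAt_G2numer (l : ℝ) :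
    HasDerivAt (G2numer b ρ α)
      (-3 * b * l * (ρ * √(l ^ 2 + 1) + l) ^ 2 / √(l ^ 2 + 1)) l := by
  have hs := hasDerivAt_sqrt_sq_add_one l
  have hN : HasDerivAt (N b ρ α) (b * (ρ + l / √(l ^ 2 + 1))) l :=
    ((((hasDerivAt_id' l).const_mul ρ).fun_add hs).const_mul b).const_add α
      |>.congr_deriv (by ring)
  have htilt : HasDerivAt (fun x => ρ * √(x ^ 2 + 1) + x) (ρ * (l / √(l ^ 2 + 1)) + 1) l :=
    (hs.const_mul ρ).add (hasDerivAt_id l)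
  refine ((hN.const_mul 2).fun_sub ((hs.const_mul b).fun_mul (htilt.fun_pow 2))).congr_deriv ?_
  have := (sqrt_sq_add_one_pos l).ne'
  field_simp
  linear_combination (-2 * b * (ρ * √(l ^ 2 + 1) + l)) * sq_sqrt (by positivity : 0 ≤ l ^ 2 + 1)

theorem G2numer_strictMonoOn_Iic (hb : 0 < b) (hρ : |ρ| < 1) :
    StrictMonoOn (G2numer b ρ α) (Iic 0) := by
  refine strictMonoOn_of_hasDerivAt_pos_of_ne (convex_Iic 0) continuous_G2numer.continuousOn
    (fun l _ => hasDerivAt_G2numer l) (c := -ρ / √(1 - ρ ^ 2)) fun l hl hlc => ?_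
  rw [interior_Iic] at hl
  have htilt := (mul_sqrt_add_eq_zero_iff hρ l).not.2 hlc
  have := mul_pos (mul_pos hb (neg_pos.2 hl)) (pow_two_pos_of_ne_zero htilt)
  exact div_pos (by linarith) (sqrt_sq_add_one_pos l)

theorem G2numer_strictAntiOn_Ici (hb : 0 < b) (hρ : |ρ| < 1) :
    StrictAntiOn (G2numer b ρ α) (Ici 0) := by
  refine strictAntiOn_of_hasDerivAt_neg_of_ne (convex_Ici 0) continuous_G2numer.continuousOn
    (fun l _ => hasDerivAt_G2numer l) (c := -ρ / √(1 - ρ ^ 2)) fun l hl hlc => ?_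
  rw [interior_Ici] at hl
  have htilt := (mul_sqrt_add_eq_zero_iff hρ l).not.2 hlc
  have := mul_pos (mul_pos hb hl) (pow_two_pos_of_ne_zero htilt)
  exact div_neg_of_neg_of_pos (by linarith) (sqrt_sq_add_one_pos l)

theorem G2numer_lstar (hρ : |ρ| < 1) :
    G2numer b ρ α (-ρ / √(1 - ρ ^ 2)) = 2 * N b ρ α (-ρ / √(1 - ρ ^ 2)) := by
  rw [G2numer, (mul_sqrt_add_eq_zero_iff hρ _).2 rfl]
  ring

theorem G2numer_zero_pos (hb : 0 < b) (hρ : |ρ| < 1) (hα : 0 < α + b * √(1 - ρ ^ 2)) :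
    0 < G2numer b ρ α 0 := by
  have ht := sq_sqrt (by nlinarith [sq_abs ρ, abs_nonneg ρ] : 0 ≤ 1 - ρ ^ 2)
  simp only [G2numer, N, shape]
  norm_num
  nlinarith [sqrt_nonneg (1 - ρ ^ 2), mul_nonneg hb.le (sq_nonneg (1 - √(1 - ρ ^ 2)))]

theorem G2numer_le_of_three_le_shape (hb : 0 ≤ b) (hρ : |ρ| ≤ 1) {l : ℝ}
    (hl : 3 ≤ shape ρ l) : G2numer b ρ α l ≤ 2 * α - 2 * b * shape ρ l := by
  have hs := sqrt_sq_add_one_pos l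
  have htilt : shape ρ l ^ 2 - 1 ≤ (ρ * √(l ^ 2 + 1) + l) ^ 2 := by
    nlinarith [sq_shape ρ l, sq_abs ρ]
  have hshape : shape ρ l ≤ 2 * √(l ^ 2 + 1) := by
    have : ρ * l ≤ |l| := (le_abs_self _).trans
      (by rw [abs_mul]; exact mul_le_of_le_one_left (abs_nonneg l) hρ)
    unfold shape
    linarith [abs_le_sqrt_sq_add_one l]
  have hcubic : 4 * shape ρ l ≤ √(l ^ 2 + 1) * (ρ * √(l ^ 2 + 1) + l) ^ 2 := by
    nlinarith
  have := mul_le_mul_of_nonneg_left hcubic hb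
  unfold G2numer N
  nlinarith

theorem tendsto_G2numer_cocompact (hb : 0 < b) (hρ : |ρ| < 1) :
    Tendsto (G2numer b ρ α) (cocompact ℝ) atBot := by
  have hshape := tendsto_shape_cocompact hρ
  refine tendsto_atBot_mono' _ ((hshape.eventually_ge_atTop 3).mono
    fun l hl => G2numer_le_of_three_le_shape (α := α) hb.le hρ.le hl) ?_
  simpa only [sub_eq_add_neg, neg_mul] using
    tendsto_atBot_add_const_left _ (2 * α)
      (hshape.const_mul_atTop_of_neg (by linarith : -(2 * b) < 0))

theorem tendsto_N_cocompact (hb : 0 < b) (hρ : |ρ| < 1) :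
    Tendsto (N b ρ α) (cocompact ℝ) atTop :=
  tendsto_atTop_add_const_left _ α ((tendsto_shape_cocompact hρ).const_mul_atTop hb)

theorem tendsto_G2_cocompact (hb : 0 < b) (hρ : |ρ| < 1) (hα : 0 < α + b * √(1 - ρ ^ 2)) :
    Tendsto (G2 b ρ α) (cocompact ℝ) (𝓝 0) := by
  have hcurv : Tendsto (fun l : ℝ => b / (l ^ 2 + 1) ^ ((3 : ℝ) / 2)) (cocompact ℝ) (𝓝 0) := by
    refine tendsto_const_nhds.div_atTop ((tendsto_rpow_atTop (by norm_num)).comp ?_)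
    exact tendsto_atTop_mono (fun l => by nlinarith [sq_abs l, abs_nonneg l])
      tendsto_abs_cocompact_atTop
  have hslope : Tendsto (fun l => (b * (ρ + l / √(l ^ 2 + 1))) ^ 2 / (2 * N b ρ α l))
      (cocompact ℝ) (𝓝 0) := by
    refine squeeze_zero (fun l => ?_) (fun l => ?_) (tendsto_const_nhds (x := (2 * b) ^ 2)
      |>.div_atTop ((tendsto_N_cocompact (α := α) hb hρ).const_mul_atTop two_pos))
    · have := N_pos hb.le hρ hα l
      positivity
    · refine div_le_div_of_nonneg_right ?_ (by linarith [N_pos hb.le hρ hα l])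
      have hs := sqrt_sq_add_one_pos l
      have hq : |l / √(l ^ 2 + 1)| ≤ 1 := by
        rw [abs_div, abs_of_pos hs]
        exact div_le_one_of_le₀ (abs_le_sqrt_sq_add_one l) hs.le
      rw [mul_pow, mul_comm 2 b, mul_pow]
      refine mul_le_mul_of_nonneg_left ?_ (sq_nonneg b)
      rw [sq_le_sq, abs_two]
      linarith [abs_add_le ρ (l / √(l ^ 2 + 1))]
  have := hcurv.sub hslope
  rwa [sub_zero] at this

end SVI

open SVI

/-- Zeros of `G₂`: `G₂(l) = N''(l) − N'(l)²/(2N(l))` has exactly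
two zeros `l₁ < min(l*, 0)` and `l₂ > max(l*, 0)`; it is positive exactly on
`(l₁, l₂)`, negative outside `[l₁, l₂]`, and tends to `0` at `±∞`. -/
theorem G2_zeros
    (b ρ α : ℝ) (hb : 0 < b) (hρ₁ : -1 < ρ) (hρ₂ : ρ < 1)
    (hα : 0 < α + b * Real.sqrt (1 - ρ ^ 2))
    (lstar : ℝ) (hlstar : lstar = -ρ / Real.sqrt (1 - ρ ^ 2))
    (N N' N'' G₂ : ℝ → ℝ)
    (hN : ∀ l, N l = α + b * (ρ * l + Real.sqrt (l ^ 2 + 1)))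
    (hN' : ∀ l, N' l = b * (ρ + l / Real.sqrt (l ^ 2 + 1)))
    (hN'' : ∀ l, N'' l = b / (l ^ 2 + 1) ^ ((3 : ℝ) / 2))
    (hG₂ : ∀ l, G₂ l = N'' l - (N' l) ^ 2 / (2 * N l)) :
    ∃ l₁ l₂ : ℝ,
      l₁ < min lstar 0 ∧ max lstar 0 < l₂ ∧
      (∀ l, G₂ l = 0 ↔ l = l₁ ∨ l = l₂) ∧
      (∀ l, 0 < G₂ l ↔ l₁ < l ∧ l < l₂) ∧
      (∀ l, l < l₁ → G₂ l < 0) ∧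
      (∀ l, l₂ < l → G₂ l < 0) ∧
      Filter.Tendsto G₂ Filter.atTop (nhds 0) ∧
      Filter.Tendsto G₂ Filter.atBot (nhds 0) := by
  have hρ : |ρ| < 1 := abs_lt.2 ⟨hρ₁, hρ₂⟩
  obtain rfl : G₂ = G2 b ρ α := funext fun l => by rw [hG₂, hN'', hN', hN]; rfl
  obtain ⟨l₁, l₂, -, -, hzero, hpos, hneg⟩ :=
    exists_zeros_of_strictMonoOn_Iic_of_strictAntiOn_Ici continuous_G2numer
      (G2numer_strictMonoOn_Iic hb hρ) (G2numer_strictAntiOn_Ici hb hρ)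
      (G2numer_zero_pos hb hρ hα)
      ((tendsto_G2numer_cocompact hb hρ).mono_left atBot_le_cocompact |>.eventually_lt_atBot 0)
      ((tendsto_G2numer_cocompact hb hρ).mono_left atTop_le_cocompact |>.eventually_lt_atBot 0)
  have hstar := (hpos lstar).1 <| by
    rw [hlstar, G2numer_lstar hρ]
    exact mul_pos two_pos (N_pos hb.le hρ hα _)
  have hzero_mem := (hpos 0).1 (G2numer_zero_pos hb hρ hα)
  have hsign (l : ℝ) := sign_G2 hb hρ hα l
  refine ⟨l₁, l₂, lt_min hstar.1 hzero_mem.1, max_lt hstar.2 hzero_mem.2, fun l => ?_, fun l => ?_,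
    fun l hl => ?_, fun l hl => ?_, ?_, ?_⟩
  · rw [← _root_.sign_eq_zero_iff, hsign, _root_.sign_eq_zero_iff, hzero]
  · rw [← sign_eq_one_iff, hsign, sign_eq_one_iff, hpos]
  · rw [← sign_eq_neg_one_iff, hsign, sign_eq_neg_one_iff, hneg]
    exact Or.inl hl
  · rw [← sign_eq_neg_one_iff, hsign, sign_eq_neg_one_iff, hneg]
    exact Or.inr hl
  · exact (tendsto_G2_cocompact hb hρ hα).mono_left atTop_le_cocompact
  · exact (tendsto_G2_cocompact hb hρ hα).mono_left atBot_le_cocompact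
end

section
/- Let 0 < b < 1 and consider the normalized SVI with ρ = −1, α = 0: N(l) = b(√(l²+1) − l). Define g₋(l) = (l − √(l²+1))²(√(l²+1)(1/2 − b/4) + bl/4) − (√(l²+1) − l) and L₋(l) = 2N(l)(1/N'(l) + 1/4) − l, where N'(l) = b(l/√(l²+1) − 1) < 0. Then: (i) s₋ := −(b+2)/(2√(3(1−b))) is the unique real solution of g₋(l) = 0; (ii) L₋(s₋) = −√(3(1−b)), and sup_{l∈ℝ} L₋(l) = −√(3(1−b)); (iii) the unique zero of G₂(l) = N''(l) − N'(l)²/(2N(l)) is l₁ = −1/√3, independently of b. -/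
/-!
Substitute `u = √(l² + 1) - l = N l / b`, which maps `ℝ` bijectively onto `(0, ∞)` with inverse
`l = (u⁻¹ - u) / 2`. In this variable `g₋ = u ((1 - b) u² - 3) / 4`,
`L₋ = -((1 - b) u / 2 + 3 / (2 u))` and `G₂ = 2 b u³ (3 - u²) / (1 + u²)³`. So `g₋` vanishes only
at `u = 3 / √(3 (1 - b))`, which is `l = s₋`, where AM-GM bounds `L₋` by `-√(3 (1 - b))` with
equality; and `G₂` vanishes only at `u = √3`, i.e. `l = -1 / √3`.
-/

open Real Set

lemma two_mul_sqrt_mul_le_add {a c u : ℝ} (ha : 0 ≤ a) (hc : 0 ≤ c) (hu : 0 < u) :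
    2 * √(a * c) ≤ a * u + c / u := by
  have h : a * u + c / u - 2 * √(a * c) = (√a * u - √c) ^ 2 / u := by
    rw [sqrt_mul ha]
    field_simp
    linear_combination (-u ^ 2) * sq_sqrt ha - sq_sqrt hc
  linarith [div_nonneg (sq_nonneg (√a * u - √c)) hu.le]

namespace SVIDecreasing

noncomputable def lOf (u : ℝ) : ℝ := (u⁻¹ - u) / 2

lemma sqrt_lOf_sq_add_one {u : ℝ} (hu : 0 < u) : √(lOf u ^ 2 + 1) = (u⁻¹ + u) / 2 := by
  rw [sqrt_eq_iff_mul_self_eq_of_pos (by positivity), lOf]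
  field_simp
  ring

lemma exists_pos_lOf_eq (l : ℝ) : ∃ u, 0 < u ∧ lOf u = l := by
  have hs : √(l ^ 2 + 1) ^ 2 = l ^ 2 + 1 := sq_sqrt (by positivity)
  have hlt : l < √(l ^ 2 + 1) := by nlinarith [sqrt_nonneg (l ^ 2 + 1)]
  refine ⟨_, sub_pos.mpr hlt, ?_⟩
  have hne : √(l ^ 2 + 1) - l ≠ 0 := (sub_pos.mpr hlt).ne'
  rw [lOf]
  field_simp
  linear_combination (-1) * hs

variable (b : ℝ)

noncomputable def N (l : ℝ) : ℝ := b * (√(l ^ 2 + 1) - l)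

noncomputable def N' (l : ℝ) : ℝ := b * (l / √(l ^ 2 + 1) - 1)

noncomputable def gMinus (l : ℝ) : ℝ :=
  (l - √(l ^ 2 + 1)) ^ 2 * (√(l ^ 2 + 1) * (1 / 2 - b / 4) + b * l / 4) - (√(l ^ 2 + 1) - l)

noncomputable def LMinus (l : ℝ) : ℝ := 2 * N b l * (1 / N' b l + 1 / 4) - l

noncomputable def G₂ (l : ℝ) : ℝ := b / (l ^ 2 + 1) ^ ((3 : ℝ) / 2) - N' b l ^ 2 / (2 * N b l)

variable {b}

lemma N_lOf {u : ℝ} (hu : 0 < u) : N b (lOf u) = b * u := by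
  rw [N, sqrt_lOf_sq_add_one hu, lOf]
  ring

lemma N'_lOf {u : ℝ} (hu : 0 < u) : N' b (lOf u) = -(2 * b * u ^ 2 / (1 + u ^ 2)) := by
  rw [N', sqrt_lOf_sq_add_one hu, lOf]
  field_simp
  ring

lemma gMinus_lOf {u : ℝ} (hu : 0 < u) : gMinus b (lOf u) = u * ((1 - b) * u ^ 2 - 3) / 4 := by
  rw [gMinus, sqrt_lOf_sq_add_one hu, lOf]
  field_simp
  ring

lemma LMinus_lOf (hb : b ≠ 0) {u : ℝ} (hu : 0 < u) :
    LMinus b (lOf u) = -((1 - b) * u / 2 + 3 / (2 * u)) := by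
  rw [LMinus, N_lOf hu, N'_lOf hu, lOf]
  field_simp
  ring

lemma G₂_lOf {u : ℝ} (hu : 0 < u) :
    G₂ b (lOf u) = 2 * b * u ^ 3 * (3 - u ^ 2) / (1 + u ^ 2) ^ 3 := by
  rw [G₂, N_lOf hu, N'_lOf hu, rpow_div_two_eq_sqrt _ (by positivity), sqrt_lOf_sq_add_one hu]
  norm_cast
  rcases eq_or_ne b 0 with rfl | hb
  · simp
  field_simp
  ring

lemma lOf_three_div_sqrt (hb : b < 1) :
    lOf (3 / √(3 * (1 - b))) = -(b + 2) / (2 * √(3 * (1 - b))) := by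
  have ht : √(3 * (1 - b)) ^ 2 = 3 * (1 - b) := sq_sqrt (by linarith)
  have ht0 : 0 < √(3 * (1 - b)) := sqrt_pos.mpr (by linarith)
  rw [lOf]
  field_simp
  linear_combination ht

lemma lOf_sqrt_three : lOf √3 = -(1 / √3) := by
  have h3 : √3 ^ 2 = 3 := sq_sqrt (by norm_num)
  have h30 : 0 < √3 := by positivity
  rw [lOf]
  field_simp
  linear_combination (-1) * h3

lemma gMinus_eq_zero_iff (hb : b < 1) (l : ℝ) :
    gMinus b l = 0 ↔ l = -(b + 2) / (2 * √(3 * (1 - b))) := by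
  have ht : √(3 * (1 - b)) ^ 2 = 3 * (1 - b) := sq_sqrt (by linarith)
  have ht0 : 0 < √(3 * (1 - b)) := sqrt_pos.mpr (by linarith)
  rw [← lOf_three_div_sqrt hb]
  constructor
  · intro h
    obtain ⟨u, hu, rfl⟩ := exists_pos_lOf_eq l
    rw [gMinus_lOf hu] at h
    have hu2 : (1 - b) * u ^ 2 = 3 := by
      have := mul_eq_zero.mp (div_eq_zero_iff.mp h |>.resolve_right four_ne_zero)
      linarith [this.resolve_left hu.ne']
    have htu : √(3 * (1 - b)) * u = 3 := by
      nlinarith [mul_pos ht0 hu]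
    congr 1
    rw [eq_div_iff ht0.ne', mul_comm, htu]
  · rintro rfl
    rw [gMinus_lOf (by positivity)]
    field_simp
    linear_combination (-9) * ht

lemma LMinus_le (hb₀ : 0 < b) (hb₁ : b < 1) (l : ℝ) : LMinus b l ≤ -√(3 * (1 - b)) := by
  obtain ⟨u, hu, rfl⟩ := exists_pos_lOf_eq l
  have hsqrt : 2 * √((1 - b) / 2 * (3 / 2)) = √(3 * (1 - b)) := by
    rw [show 3 * (1 - b) = 2 ^ 2 * ((1 - b) / 2 * (3 / 2)) by ring,
      sqrt_mul (by norm_num : (0 : ℝ) ≤ 2 ^ 2), sqrt_sq two_pos.le]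
  calc LMinus b (lOf u) = -((1 - b) / 2 * u + 3 / 2 / u) := by
        rw [LMinus_lOf hb₀.ne' hu]; ring
    _ ≤ -(2 * √((1 - b) / 2 * (3 / 2))) :=
        neg_le_neg (two_mul_sqrt_mul_le_add (by linarith) (by norm_num) hu)
    _ = -√(3 * (1 - b)) := by rw [hsqrt]

lemma LMinus_three_div_sqrt (hb₀ : 0 < b) (hb₁ : b < 1) :
    LMinus b (-(b + 2) / (2 * √(3 * (1 - b)))) = -√(3 * (1 - b)) := by
  have ht : √(3 * (1 - b)) ^ 2 = 3 * (1 - b) := sq_sqrt (by linarith)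
  have ht0 : 0 < √(3 * (1 - b)) := sqrt_pos.mpr (by linarith)
  rw [← lOf_three_div_sqrt hb₁, LMinus_lOf hb₀.ne' (by positivity)]
  set t := √(3 * (1 - b))
  field_simp
  linear_combination ht

lemma isGreatest_range_LMinus (hb₀ : 0 < b) (hb₁ : b < 1) :
    IsGreatest (range (LMinus b)) (-√(3 * (1 - b))) :=
  ⟨⟨_, LMinus_three_div_sqrt hb₀ hb₁⟩, by rintro _ ⟨l, rfl⟩; exact LMinus_le hb₀ hb₁ l⟩

lemma G₂_eq_zero_iff (hb : b ≠ 0) (l : ℝ) : G₂ b l = 0 ↔ l = -(1 / √3) := by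
  rw [← lOf_sqrt_three]
  constructor
  · intro h
    obtain ⟨u, hu, rfl⟩ := exists_pos_lOf_eq l
    rw [G₂_lOf hu] at h
    have hu2 : u ^ 2 = 3 := by
      have := div_eq_zero_iff.mp h |>.resolve_right (by positivity)
      have hne : 2 * b * u ^ 3 ≠ 0 := by positivity
      linarith [(mul_eq_zero.mp this).resolve_left hne]
    rw [← sqrt_sq hu.le, hu2]
  · rintro rfl
    rw [G₂_lOf (by positivity), sq_sqrt (by norm_num)]
    ring

end SVIDecreasing

/-- SVI decreasing to zero: `ρ = −1`, `α = 0`, `0 < b < 1`: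
(i) `s₋ = −(b+2)/(2√(3(1−b)))` is the unique real solution of `g₋(l) = 0`;
(ii) `L₋(s₋) = −√(3(1−b))` and `sup_{l∈ℝ} L₋(l) = −√(3(1−b))`;
(iii) the unique zero of `G₂` is `l₁ = −1/√3`, independently of `b`. -/
theorem svi_decreasing_to_zero
    (b : ℝ) (hb₀ : 0 < b) (hb₁ : b < 1)
    (N N' gm Lm G₂ : ℝ → ℝ)
    (hN : ∀ l, N l = b * (Real.sqrt (l ^ 2 + 1) - l))
    (hN' : ∀ l, N' l = b * (l / Real.sqrt (l ^ 2 + 1) - 1))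
    (hgm : ∀ l, gm l = (l - Real.sqrt (l ^ 2 + 1)) ^ 2 *
        (Real.sqrt (l ^ 2 + 1) * (1 / 2 - b / 4) + b * l / 4) -
        (Real.sqrt (l ^ 2 + 1) - l))
    (hLm : ∀ l, Lm l = 2 * N l * (1 / N' l + 1 / 4) - l)
    (hG₂ : ∀ l, G₂ l = b / (l ^ 2 + 1) ^ ((3 : ℝ) / 2) - (N' l) ^ 2 / (2 * N l))
    (sm : ℝ) (hsm : sm = -(b + 2) / (2 * Real.sqrt (3 * (1 - b)))) :
    (gm sm = 0 ∧ ∀ l, gm l = 0 → l = sm) ∧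
    (Lm sm = -Real.sqrt (3 * (1 - b)) ∧
      sSup (Set.range Lm) = -Real.sqrt (3 * (1 - b))) ∧
    (G₂ (-(1 / Real.sqrt 3)) = 0 ∧ ∀ l, G₂ l = 0 → l = -(1 / Real.sqrt 3)) := by
  obtain rfl : N = SVIDecreasing.N b := funext hN
  obtain rfl : N' = SVIDecreasing.N' b := funext hN'
  obtain rfl : gm = SVIDecreasing.gMinus b := funext hgm
  obtain rfl : Lm = SVIDecreasing.LMinus b := funext hLm
  obtain rfl : G₂ = SVIDecreasing.G₂ b := funext hG₂
  subst hsm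
  have hg := SVIDecreasing.gMinus_eq_zero_iff hb₁
  have hG := SVIDecreasing.G₂_eq_zero_iff hb₀.ne'
  exact ⟨⟨(hg _).2 rfl, fun l ↦ (hg l).1⟩,
    ⟨SVIDecreasing.LMinus_three_div_sqrt hb₀ hb₁,
      (SVIDecreasing.isGreatest_range_LMinus hb₀ hb₁).csSup_eq⟩,
    (hG _).2 rfl, fun l ↦ (hG l).1⟩
end

section
/- Let 0 < b < 2 and consider the normalized SVI with ρ = 0: for α ∈ ℝ let N_α(l) = α + b√(l²+1), L₋(l; α) = 2N_α(l)(1/N'(l) + 1/4) − l for l < 0, where N'(l) = bl/√(l²+1), and g₋(l) = (l²/4)(2√(l²+1) + bl) − √(l²+1). Set l⁰ := −6b/√(b⁴ − 20b² + 64) (note b⁴ − 20b² + 64 = (b²−4)(b²−16) > 0 for 0 < b < 2) and α⁰ := b·g₋(l⁰). Then L₋(l⁰; α⁰) = 0 and g₋(l⁰) > −1; in particular the Fukasawa threshold F(b,0) = α⁰ satisfies F(b,0) > −b. -/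
/-!
Since `D + 36b² = (b² + 8)²` for `D = b⁴ − 20b² + 64`, the point `l⁰ = −6b/√D` has
`√(l⁰² + 1) = (b² + 8)/√D`, so every quantity at `l⁰` is a rational function of `b` and `√D`.
Then `1/N'(l⁰) + 1/4 = (b² − 16)/(12b²)` and `N_{α⁰}(l⁰) = 36b³(4 − b²)/D^{3/2}`, whose product
is `l⁰/2` because `D = (b² − 4)(b² − 16)`; this is `L₋(l⁰; α⁰) = 0`.
Moreover `g₋(l⁰) = −P/D^{3/2}` with `P = b⁶ + 24b⁴ − 240b² + 512`, and `g₋(l⁰) > −1` follows from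
`D³ − P² = 108b⁴(4 − b²)³ > 0`.
-/

open Real

noncomputable section

namespace SVI

def disc (b : ℝ) : ℝ := b ^ 4 - 20 * b ^ 2 + 64

def lZero (b : ℝ) : ℝ := -(6 * b) / √(disc b)

def normSVI (b α l : ℝ) : ℝ := α + b * √(l ^ 2 + 1)

def normSVIDeriv (b l : ℝ) : ℝ := b * l / √(l ^ 2 + 1)

def lowerEnd (b α l : ℝ) : ℝ := 2 * normSVI b α l * (1 / normSVIDeriv b l + 1 / 4) - l

def gMinus (b l : ℝ) : ℝ := l ^ 2 / 4 * (2 * √(l ^ 2 + 1) + b * l) - √(l ^ 2 + 1)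

variable {b : ℝ}

lemma disc_eq_mul (b : ℝ) : disc b = (b ^ 2 - 4) * (b ^ 2 - 16) := by
  unfold disc; ring

lemma disc_pos (hb : b ^ 2 < 4) : 0 < disc b := by
  rw [disc_eq_mul]
  exact mul_pos_of_neg_of_neg (by linarith) (by linarith)

lemma lZero_neg (hb : 0 < b) (hD : 0 < disc b) : lZero b < 0 :=
  div_neg_of_neg_of_pos (by linarith) (sqrt_pos.2 hD)

lemma sqrt_lZero_sq_add_one (hD : 0 < disc b) :
    √(lZero b ^ 2 + 1) = (b ^ 2 + 8) / √(disc b) := by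
  have hsq : lZero b ^ 2 + 1 = ((b ^ 2 + 8) / √(disc b)) ^ 2 := by
    rw [lZero, div_pow, div_pow, sq_sqrt hD.le]
    field_simp
    unfold disc
    ring
  rw [hsq, sqrt_sq (by positivity)]

lemma gMinus_lZero (hD : 0 < disc b) :
    gMinus b (lZero b) =
      -(b ^ 6 + 24 * b ^ 4 - 240 * b ^ 2 + 512) / (disc b * √(disc b)) := by
  have ht : 0 < √(disc b) := sqrt_pos.2 hD
  rw [gMinus, sqrt_lZero_sq_add_one hD, lZero, div_pow, sq_sqrt hD.le]
  field_simp
  unfold disc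
  ring

lemma normSVIDeriv_lZero (hD : 0 < disc b) :
    normSVIDeriv b (lZero b) = -(6 * b ^ 2) / (b ^ 2 + 8) := by
  have ht : 0 < √(disc b) := sqrt_pos.2 hD
  rw [normSVIDeriv, sqrt_lZero_sq_add_one hD, lZero]
  field_simp

lemma normSVI_lZero (hD : 0 < disc b) :
    normSVI b (b * gMinus b (lZero b)) (lZero b) =
      36 * b ^ 3 * (4 - b ^ 2) / (disc b * √(disc b)) := by
  have ht : 0 < √(disc b) := sqrt_pos.2 hD
  rw [normSVI, gMinus_lZero hD, sqrt_lZero_sq_add_one hD]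
  field_simp
  unfold disc
  ring

lemma lowerEnd_lZero (hb : b ≠ 0) (hD : 0 < disc b) :
    lowerEnd b (b * gMinus b (lZero b)) (lZero b) = 0 := by
  have ht : 0 < √(disc b) := sqrt_pos.2 hD
  rw [lowerEnd, normSVI_lZero hD, normSVIDeriv_lZero hD, lZero]
  field_simp
  unfold disc
  ring

lemma neg_one_lt_gMinus_lZero (hb : b ≠ 0) (hb4 : b ^ 2 < 4) : -1 < gMinus b (lZero b) := by
  have hD := disc_pos hb4
  have hDt : 0 < disc b * √(disc b) := by positivity
  have hcube : disc b ^ 3 - (b ^ 6 + 24 * b ^ 4 - 240 * b ^ 2 + 512) ^ 2 =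
      108 * b ^ 4 * (4 - b ^ 2) ^ 3 := by
    unfold disc; ring
  have hgap : 0 < 108 * b ^ 4 * (4 - b ^ 2) ^ 3 := by
    have : 0 < 4 - b ^ 2 := by linarith
    positivity
  have hsq : (b ^ 6 + 24 * b ^ 4 - 240 * b ^ 2 + 512) ^ 2 < (disc b * √(disc b)) ^ 2 := by
    rw [mul_pow, sq_sqrt hD.le]
    linarith
  rw [gMinus_lZero hD, neg_div, neg_lt_neg_iff, div_lt_one hDt]
  exact lt_of_pow_lt_pow_left₀ 2 hDt.le hsq

end SVI

end

open SVI in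
/-- Fukasawa threshold at `ρ = 0`: with
`l⁰ = −6b/√(b⁴ − 20b² + 64)` and `α⁰ = b·g₋(l⁰)`, one has `L₋(l⁰; α⁰) = 0` and
`g₋(l⁰) > −1`; in particular the Fukasawa threshold `F(b,0) = α⁰` satisfies
`F(b,0) > −b`. -/
theorem fukasawa_threshold_rho_zero
    (b : ℝ) (hb₀ : 0 < b) (hb₂ : b < 2)
    (N' gm : ℝ → ℝ) (Nα Lm : ℝ → ℝ → ℝ)
    (hN' : ∀ l, N' l = b * l / Real.sqrt (l ^ 2 + 1))
    (hNα : ∀ α l, Nα α l = α + b * Real.sqrt (l ^ 2 + 1))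
    (hLm : ∀ α l, l < 0 → Lm α l = 2 * Nα α l * (1 / N' l + 1 / 4) - l)
    (hgm : ∀ l, gm l = l ^ 2 / 4 * (2 * Real.sqrt (l ^ 2 + 1) + b * l) -
        Real.sqrt (l ^ 2 + 1))
    (l₀ α₀ : ℝ)
    (hl₀ : l₀ = -(6 * b) / Real.sqrt (b ^ 4 - 20 * b ^ 2 + 64))
    (hα₀ : α₀ = b * gm l₀) :
    0 < b ^ 4 - 20 * b ^ 2 + 64 ∧
    b ^ 4 - 20 * b ^ 2 + 64 = (b ^ 2 - 4) * (b ^ 2 - 16) ∧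
    Lm α₀ l₀ = 0 ∧ -1 < gm l₀ ∧ -b < α₀ := by
  have hb4 : b ^ 2 < 4 := by nlinarith
  have hD := disc_pos hb4
  obtain rfl : N' = normSVIDeriv b := funext hN'
  obtain rfl : Nα = normSVI b := funext fun α => funext (hNα α)
  obtain rfl : gm = gMinus b := funext hgm
  obtain rfl : l₀ = lZero b := hl₀
  subst hα₀
  have hg := neg_one_lt_gMinus_lZero hb₀.ne' hb4
  refine ⟨hD, disc_eq_mul b, ?_, hg, by nlinarith⟩
  rw [hLm _ _ (lZero_neg hb₀ hD)]
  exact lowerEnd_lZero hb₀.ne' hD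
end
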